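/- arXiv:2209.07101 — 5 statements merged into one kernel-verified Lean document; each statement's English description precedes it below -/
import Mathlib

section
/- The map ψ₀ is holomorphic and injective on {w ∈ ℂ : |w| > 1}, its image is ℂ ∖ γ₀, and ψ₀(w)/w → 1 as |w| → ∞. -/
noncomputable section

open Real

/-- The L-shaped arc `γ₀`. -/
def gamma0 : Set ℂ :=
  ((fun x : ℝ => (-1 + Complex.I) * (x : ℂ)) '' Set.Icc 0 ((27 : ℝ) ^ ((1 : ℝ) / 4) / Real.sqrt 2)) ∪
  ((fun x : ℝ => (-1 - Complex.I) * (x : ℂ)) '' Set.Icc 0 ((27 : ℝ) ^ ((1 : ℝ) / 4) / Real.sqrt 2))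

/-- The exterior conformal map `ψ₀` (principal branch of the square root;
at `w = ±1` Lean's conventions give `ψ₀(±1) = 0`, matching the continuous extension). -/
def psi0 (w : ℂ) : ℂ := (w - 1 / w) * ((w - 1) / (w + 1)) ^ ((1 : ℂ) / 2)

def thetaAux (n k : ℕ) : ℝ :=
  if n % 2 = 0 then 2 * (k : ℝ) * Real.pi / ((n : ℝ) + 1)
  else (2 * (k : ℝ) + 1) * Real.pi / ((n : ℝ) + 1)

/-- The angles `θ_{n,k}`, `0 ≤ k ≤ n`. -/
def theta (n k : ℕ) : ℝ :=
  if k ≤ n / 2 then thetaAux n k else - thetaAux n (2 * (n / 2) + 1 - k)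

/-- The function `J : [2π/3, π] → [0, 2π/3]`; for `t ∈ [2π/3, π]` the set below is a
singleton by strict monotonicity of `x ↦ sin x · sin²(x/2)` on `[0, 2π/3]`. -/
def Jfun (t : ℝ) : ℝ :=
  sInf {s : ℝ | s ∈ Set.Icc 0 (2 * Real.pi / 3) ∧
    Real.sin s * Real.sin (s / 2) ^ 2 = Real.sin t * Real.sin (t / 2) ^ 2}

/-- The inverse function `J⁻¹ : [0, 2π/3] → [2π/3, π]`. -/
def Jinvfun (s : ℝ) : ℝ :=
  sInf {t : ℝ | t ∈ Set.Icc (2 * Real.pi / 3) Real.pi ∧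
    Real.sin t * Real.sin (t / 2) ^ 2 = Real.sin s * Real.sin (s / 2) ^ 2}

def rho (n : ℕ) : ℝ := 1 + 1 / ((n : ℝ) + 1)

/-- The Fejér points `z*_{n,k}` on `γ₀`. -/
def zstar (n k : ℕ) : ℂ := psi0 (Complex.exp (Complex.I * (theta n k : ℂ)))

/-- The points `ζ*_{n,k}` on the level curve `Γ_n`. -/
def zetas (n k : ℕ) : ℂ := psi0 ((rho n : ℂ) * Complex.exp (Complex.I * (theta n k : ℂ)))

/-- `ω_n(z) = ∏_{k=0}^n (z − z*_{n,k})`. -/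
def omegaF (n : ℕ) : ℂ → ℂ := fun z => ∏ k ∈ Finset.range (n + 1), (z - zstar n k)

def sigmaSgn (t : ℝ) : ℝ := if 0 ≤ t then 1 else -1

/-- `k₁(t)`: the smallest index `k ≤ n` with `|θ_{n,k}| ≤ 2π/3` minimizing `|θ_{n,k} − t|`. -/
def k1 (n : ℕ) (t : ℝ) : ℕ :=
  sInf {k : ℕ | k ≤ n ∧ abs (theta n k) ≤ 2 * Real.pi / 3 ∧
    ∀ j, j ≤ n → abs (theta n j) ≤ 2 * Real.pi / 3 →
      abs (theta n k - t) ≤ abs (theta n j - t)}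

/-- `k₂(t)`: the smallest index `k ≤ n` with `2π/3 < |θ_{n,k}| < π` minimizing
`|θ_{n,k} − σ(t)·J⁻¹(|t|)|`. -/
def k2 (n : ℕ) (t : ℝ) : ℕ :=
  sInf {k : ℕ | k ≤ n ∧ 2 * Real.pi / 3 < abs (theta n k) ∧ abs (theta n k) < Real.pi ∧
    ∀ j, j ≤ n → 2 * Real.pi / 3 < abs (theta n j) → abs (theta n j) < Real.pi →
      abs (theta n k - sigmaSgn t * Jinvfun (abs t)) ≤
        abs (theta n j - sigmaSgn t * Jinvfun (abs t))}

/-- `(j,k)` is an adjustment pair. -/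
def AdjPair (n j k : ℕ) : Prop :=
  j ≤ n ∧ k ≤ n ∧ 0 ≤ theta n j ∧ theta n j ≤ 2 * Real.pi / 3 ∧
  2 * Real.pi / 3 < theta n k ∧ theta n k < Real.pi ∧
  |theta n j - Jfun (theta n k)| < 2 * Real.pi / (3 * ((n : ℝ) + 1))

/-- The adjustment conditions (i)–(v) on `θ̃ : {0,…,n} → ℝ`. -/
def AdjCond (n : ℕ) (θt : ℕ → ℝ) : Prop :=
  (∀ j, j ≤ n → 0 ≤ theta n j → theta n j ≤ 2 * Real.pi / 3 →
    (∀ k, ¬ AdjPair n j k) → θt j = theta n j) ∧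
  (∀ j k, AdjPair n j k → Jfun (theta n k) ≤ theta n j →
    θt j = Jfun (theta n k) + 2 * Real.pi / (3 * ((n : ℝ) + 1)) ∧
    θt k = theta n j - 2 * Real.pi / (3 * ((n : ℝ) + 1))) ∧
  (∀ j k, AdjPair n j k → theta n j < Jfun (theta n k) →
    θt j = Jfun (theta n k) - 2 * Real.pi / (3 * ((n : ℝ) + 1)) ∧
    θt k = theta n j + 2 * Real.pi / (3 * ((n : ℝ) + 1))) ∧
  (∀ k, k ≤ n → 2 * Real.pi / 3 < theta n k → theta n k < Real.pi →
    (∀ j, ¬ AdjPair n j k) → θt k = Jfun (theta n k)) ∧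
  (∀ k, n / 2 < k → k ≤ n → θt k = - θt (2 * (n / 2) + 1 - k))

/-- `dist(z, Γ_n) = inf_{|w| = ρ_n} |z − ψ₀(w)|`. -/
def distGamma (n : ℕ) (z : ℂ) : ℝ :=
  Metric.infDist z (psi0 '' {w : ℂ | ‖w‖ = rho n})

/-- `∫_{γ₀} |P(z)|^p |dz|`. -/
def Pint (p : ℝ) (P : Polynomial ℂ) : ℝ :=
  Real.sqrt 2 * ∫ x in (0 : ℝ)..((27 : ℝ) ^ ((1 : ℝ) / 4) / Real.sqrt 2),
    (‖P.eval ((-1 + Complex.I) * (x : ℂ))‖ ^ p +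
     ‖P.eval ((-1 - Complex.I) * (x : ℂ))‖ ^ p)

section AuxPsi0
open Filter

/-- the auxiliary rational map `h(v) = v - v⁻³`. -/
def hm (v : ℂ) : ℂ := v - (v ^ 3)⁻¹

/-- open sector `|arg v| < π/4`. -/
def Ssec : Set ℂ := {v : ℂ | |v.im| < v.re}

/-- boundary rays `|arg v| = π/4`, `v ≠ 0`. -/
def Bsec : Set ℂ := {v : ℂ | 0 < v.re ∧ |v.im| = v.re}

def m0 : ℝ := 2 * Real.sqrt 2 / (27 : ℝ) ^ ((1 : ℝ) / 4)

/-- the two removed rays. -/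
def Rray : Set ℂ := {z : ℂ | ∃ t : ℝ, m0 ≤ t ∧ (z = t * (1 + Complex.I) ∨ z = t * (1 - Complex.I))}

lemma c27_pos : (0:ℝ) < (27 : ℝ) ^ ((1 : ℝ) / 4) := Real.rpow_pos_of_pos (by norm_num) _

lemma c27_pow : ((27 : ℝ) ^ ((1 : ℝ) / 4)) ^ (4:ℕ) = 27 := by
  rw [← Real.rpow_natCast ((27:ℝ) ^ ((1:ℝ)/4)) 4, ← Real.rpow_mul (by norm_num : (0:ℝ) ≤ 27)]
  norm_num

lemma m0_pos : 0 < m0 := by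
  unfold m0
  positivity

lemma Ssec_re {v : ℂ} (hv : v ∈ Ssec) : 0 < v.re := lt_of_le_of_lt (abs_nonneg _) hv

lemma Ssec_ne {v : ℂ} (hv : v ∈ Ssec) : v ≠ 0 := by
  intro h; have := Ssec_re hv; rw [h] at this; simp at this

/- ### polar computation helpers -/

lemma polar_mul (r s α β : ℝ) :
    (((r:ℝ):ℂ) * Complex.exp ((α:ℝ) * Complex.I)) * (((s:ℝ):ℂ) * Complex.exp ((β:ℝ) * Complex.I))
      = (((r*s:ℝ)):ℂ) * Complex.exp (((α+β:ℝ)) * Complex.I) := by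
  rw [mul_mul_mul_comm, ← Complex.exp_add]
  push_cast
  ring_nf

lemma polar_pow (r α : ℝ) (n : ℕ) :
    (((r:ℝ):ℂ) * Complex.exp ((α:ℝ) * Complex.I)) ^ n
      = (((r^n:ℝ)):ℂ) * Complex.exp (((n*α:ℝ)) * Complex.I) := by
  rw [mul_pow, ← Complex.exp_nat_mul]
  push_cast
  ring_nf

lemma cexp_im (r θ : ℝ) : (((r:ℝ):ℂ) * Complex.exp ((θ:ℝ) * Complex.I)).im = r * Real.sin θ := by
  simp [Complex.exp_ofReal_mul_I_re, Complex.mul_im, Complex.exp_im, Complex.exp_re]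

lemma cexp_re (r θ : ℝ) : (((r:ℝ):ℂ) * Complex.exp ((θ:ℝ) * Complex.I)).re = r * Real.cos θ := by
  simp [Complex.mul_re, Complex.exp_im, Complex.exp_re]


lemma abs_arg_le_pi4 {z : ℂ} (h1 : 0 < z.re) (h2 : |z.im| ≤ z.re) : |Complex.arg z| ≤ π/4 := by
  have h3 : |Complex.arg z| < π/2 := Complex.abs_arg_lt_pi_div_two_iff.2 (Or.inl h1)
  obtain ⟨h3a, h3b⟩ := abs_lt.mp h3
  have htan : Real.tan (Complex.arg z) = z.im / z.re := Complex.tan_arg z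
  have harc : Real.arctan (Real.tan (Complex.arg z)) = Complex.arg z :=
    Real.arctan_tan (by linarith) h3b
  obtain ⟨h4a, h4b⟩ := abs_le.mp (show |z.im / z.re| ≤ 1 by
    rw [abs_div, abs_of_pos h1, div_le_one h1]; exact h2)
  rw [abs_le]
  constructor
  · have := Real.arctan_strictMono.monotone (show (-1:ℝ) ≤ Real.tan (Complex.arg z) by
      rw [htan]; linarith)
    rw [harc, Real.arctan_neg, Real.arctan_one] at this
    linarith
  · have := Real.arctan_strictMono.monotone (show Real.tan (Complex.arg z) ≤ 1 by
      rw [htan]; linarith)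
    rw [harc, Real.arctan_one] at this
    linarith

lemma abs_arg_lt_pi4 {z : ℂ} (h2 : |z.im| < z.re) : |Complex.arg z| < π/4 := by
  have h1 : 0 < z.re := lt_of_le_of_lt (abs_nonneg _) h2
  have h3 : |Complex.arg z| < π/2 := Complex.abs_arg_lt_pi_div_two_iff.2 (Or.inl h1)
  obtain ⟨h3a, h3b⟩ := abs_lt.mp h3
  have htan : Real.tan (Complex.arg z) = z.im / z.re := Complex.tan_arg z
  have harc : Real.arctan (Real.tan (Complex.arg z)) = Complex.arg z :=
    Real.arctan_tan (by linarith) h3b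
  obtain ⟨h4a, h4b⟩ := abs_lt.mp (show |z.im / z.re| < 1 by
    rw [abs_div, abs_of_pos h1, div_lt_one h1]; exact h2)
  rw [abs_lt]
  constructor
  · have := Real.arctan_strictMono (show (-1:ℝ) < Real.tan (Complex.arg z) by rw [htan]; linarith)
    rw [harc, Real.arctan_neg, Real.arctan_one] at this
    linarith
  · have := Real.arctan_strictMono (show Real.tan (Complex.arg z) < 1 by rw [htan]; linarith)
    rw [harc, Real.arctan_one] at this
    linarith

/- ### the key trigonometric lemma -/

lemma key {a b : ℂ} (ha2 : |a.im| < a.re) (hb : 0 < b.re) (hb2 : |b.im| ≤ b.re) :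
    a ^ 2 + a * b + b ^ 2 + (a * b) ^ 3 ≠ 0 := by
  have ha : 0 < a.re := lt_of_le_of_lt (abs_nonneg _) ha2
  have ha0 : a ≠ 0 := fun h => by simp [h] at ha
  have hb0 : b ≠ 0 := fun h => by simp [h] at hb
  set ra := ‖a‖ with hra
  set rb := ‖b‖ with hrb
  set α := Complex.arg a with hαdef
  set β := Complex.arg b with hβdef
  have hrapos : 0 < ra := norm_pos_iff.mpr ha0
  have hrbpos : 0 < rb := norm_pos_iff.mpr hb0
  have hpi := Real.pi_pos
  -- angle bounds
  have hA : |α| < π/4 := abs_arg_lt_pi4 ha2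
  have hB : |β| ≤ π/4 := abs_arg_le_pi4 hb hb2
  intro hE
  -- polar forms
  have epa : ((ra:ℝ):ℂ) * Complex.exp ((α:ℝ) * Complex.I) = a := Complex.norm_mul_exp_arg_mul_I a
  have epb : ((rb:ℝ):ℂ) * Complex.exp ((β:ℝ) * Complex.I) = b := Complex.norm_mul_exp_arg_mul_I b
  have hI : ∀ θ:ℝ, ra^2*Real.sin (2*α+θ) + ra*rb*Real.sin ((α+β)+θ) + rb^2*Real.sin (2*β+θ)
      + (ra*rb)^3*Real.sin (3*(α+β)+θ) = 0 := by
    intro θ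
    have h0 : (a^2 + a*b + b^2 + (a*b)^3) * (((1:ℝ):ℂ) * Complex.exp ((θ:ℝ) * Complex.I)) = 0 := by
      rw [hE, zero_mul]
    rw [← epa, ← epb] at h0
    rw [polar_mul, polar_pow, polar_pow, polar_pow, add_mul, add_mul, add_mul,
        polar_mul, polar_mul, polar_mul, polar_mul] at h0
    have h1 := congrArg Complex.im h0
    simp only [Complex.add_im, cexp_im, Complex.zero_im] at h1
    calc ra^2*Real.sin (2*α+θ) + ra*rb*Real.sin ((α+β)+θ) + rb^2*Real.sin (2*β+θ)
          + (ra*rb)^3*Real.sin (3*(α+β)+θ)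
        = ra ^ 2 * 1 * Real.sin (2 * α + θ) + ra * rb * 1 * Real.sin (α + β + θ)
          + rb ^ 2 * 1 * Real.sin (2 * β + θ) + (ra * rb) ^ 3 * 1 * Real.sin (3 * (α + β) + θ) := by
          ring_nf
      _ = 0 := by rw [← h1]; ring_nf
  have hR : ra^2*Real.cos (2*α) + ra*rb*Real.cos (α+β) + rb^2*Real.cos (2*β)
      + (ra*rb)^3*Real.cos (3*(α+β)) = 0 := by
    have h1 := congrArg Complex.re hE
    rw [← epa, ← epb] at h1
    rw [polar_mul, polar_pow, polar_pow, polar_pow] at h1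
    simp only [Complex.add_re, cexp_re, Complex.zero_re] at h1
    push_cast at h1
    linarith
  obtain ⟨hA1, hA2⟩ := abs_lt.mp hA
  obtain ⟨hB1, hB2⟩ := abs_le.mp hB
  rcases le_or_gt (α + β) (π/6) with hc1 | hc1
  · rcases le_or_gt (-(π/6)) (α + β) with hc2 | hc2
    · -- |α+β| ≤ π/6 : real part positive
      have t1 : 0 < ra^2*Real.cos (2*α) := by
        apply mul_pos (by positivity)
        apply Real.cos_pos_of_mem_Ioo; constructor <;> [linarith; linarith]
      have t2 : 0 ≤ ra*rb*Real.cos (α+β) := by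
        apply mul_nonneg (by positivity)
        apply Real.cos_nonneg_of_mem_Icc; constructor <;> [linarith; linarith]
      have t3 : 0 ≤ rb^2*Real.cos (2*β) := by
        apply mul_nonneg (by positivity)
        apply Real.cos_nonneg_of_mem_Icc; constructor <;> [linarith; linarith]
      have t4 : 0 ≤ (ra*rb)^3*Real.cos (3*(α+β)) := by
        apply mul_nonneg (by positivity)
        apply Real.cos_nonneg_of_mem_Icc; constructor <;> [linarith; linarith]
      linarith
    · -- α+β < -π/6
      rcases le_or_gt α β with hab | hab
      · have h := hI (-(2*β))
        have e1 : 2*α + -(2*β) = 2*(α-β) := by ring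
        have e2 : (α+β) + -(2*β) = α - β := by ring
        have e3 : 2*β + -(2*β) = 0 := by ring
        have e4 : 3*(α+β) + -(2*β) = 3*α+β := by ring
        rw [e1, e2, e3, e4, Real.sin_zero] at h
        have t1 : ra^2*Real.sin (2*(α-β)) ≤ 0 := by
          apply mul_nonpos_of_nonneg_of_nonpos (by positivity)
          apply Real.sin_nonpos_of_nonpos_of_neg_pi_le <;> linarith
        have t2 : ra*rb*Real.sin (α-β) ≤ 0 := by
          apply mul_nonpos_of_nonneg_of_nonpos (by positivity)
          apply Real.sin_nonpos_of_nonpos_of_neg_pi_le <;> linarith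
        have t4 : (ra*rb)^3*Real.sin (3*α+β) < 0 := by
          apply mul_neg_of_pos_of_neg (by positivity)
          apply Real.sin_neg_of_neg_of_neg_pi_lt <;> linarith
        linarith
      · have h := hI (-(2*α))
        have e1 : 2*α + -(2*α) = 0 := by ring
        have e2 : (α+β) + -(2*α) = β - α := by ring
        have e3 : 2*β + -(2*α) = 2*(β-α) := by ring
        have e4 : 3*(α+β) + -(2*α) = α+3*β := by ring
        rw [e1, e2, e3, e4, Real.sin_zero] at h
        have t2 : ra*rb*Real.sin (β-α) < 0 := by
          apply mul_neg_of_pos_of_neg (by positivity)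
          apply Real.sin_neg_of_neg_of_neg_pi_lt <;> linarith
        have t3 : rb^2*Real.sin (2*(β-α)) < 0 := by
          apply mul_neg_of_pos_of_neg (by positivity)
          apply Real.sin_neg_of_neg_of_neg_pi_lt <;> linarith
        have t4 : (ra*rb)^3*Real.sin (α+3*β) < 0 := by
          apply mul_neg_of_pos_of_neg (by positivity)
          apply Real.sin_neg_of_neg_of_neg_pi_lt <;> linarith
        linarith
  · -- α+β > π/6
    rcases le_or_gt β α with hab | hab
    · have h := hI (-(2*β))
      have e1 : 2*α + -(2*β) = 2*(α-β) := by ring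
      have e2 : (α+β) + -(2*β) = α - β := by ring
      have e3 : 2*β + -(2*β) = 0 := by ring
      have e4 : 3*(α+β) + -(2*β) = 3*α+β := by ring
      rw [e1, e2, e3, e4, Real.sin_zero] at h
      have t1 : 0 ≤ ra^2*Real.sin (2*(α-β)) := by
        apply mul_nonneg (by positivity)
        apply Real.sin_nonneg_of_nonneg_of_le_pi <;> linarith
      have t2 : 0 ≤ ra*rb*Real.sin (α-β) := by
        apply mul_nonneg (by positivity)
        apply Real.sin_nonneg_of_nonneg_of_le_pi <;> linarith
      have t4 : 0 < (ra*rb)^3*Real.sin (3*α+β) := by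
        apply mul_pos (by positivity)
        apply Real.sin_pos_of_pos_of_lt_pi <;> linarith
      linarith
    · have h := hI (-(2*α))
      have e1 : 2*α + -(2*α) = 0 := by ring
      have e2 : (α+β) + -(2*α) = β - α := by ring
      have e3 : 2*β + -(2*α) = 2*(β-α) := by ring
      have e4 : 3*(α+β) + -(2*α) = α+3*β := by ring
      rw [e1, e2, e3, e4, Real.sin_zero] at h
      have t2 : 0 < ra*rb*Real.sin (β-α) := by
        apply mul_pos (by positivity)
        apply Real.sin_pos_of_pos_of_lt_pi <;> linarith
      have t3 : 0 < rb^2*Real.sin (2*(β-α)) := by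
        apply mul_pos (by positivity)
        apply Real.sin_pos_of_pos_of_lt_pi <;> linarith
      have t4 : 0 < (ra*rb)^3*Real.sin (α+3*β) := by
        apply mul_pos (by positivity)
        apply Real.sin_pos_of_pos_of_lt_pi <;> linarith
      linarith

/- ### injectivity of hm -/

lemma hm_eq_imp {a b : ℂ} (ha : a ≠ 0) (hb : b ≠ 0) (hab : a ≠ b) (h : hm a = hm b) :
    a ^ 2 + a * b + b ^ 2 + (a * b) ^ 3 = 0 := by
  have h3a : a ^ 3 ≠ 0 := pow_ne_zero _ ha
  have h3b : b ^ 3 ≠ 0 := pow_ne_zero _ hb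
  have h2 : (a*b)^3 * (a - b) = b^3 - a^3 := by
    have h' : a - b = (a^3)⁻¹ - (b^3)⁻¹ := by
      unfold hm at h; linear_combination h
    rw [h']
    field_simp
  have h3 : (a - b) * (a^2 + a*b + b^2 + (a*b)^3) = 0 := by linear_combination h2
  rcases mul_eq_zero.mp h3 with h4 | h4
  · exact absurd (sub_eq_zero.mp h4) hab
  · exact h4

lemma hm_inj : Set.InjOn hm Ssec := by
  intro a ha b hb h
  by_contra hab
  exact key ha (Ssec_re hb) (le_of_lt hb) (hm_eq_imp (Ssec_ne ha) (Ssec_ne hb) hab h)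

lemma hm_S_ne_hm_B {a b : ℂ} (ha : a ∈ Ssec) (hb : b ∈ Bsec) : hm a ≠ hm b := by
  intro h
  have hab : a ≠ b := by
    intro he; rw [he] at ha; exact absurd hb.2 (ne_of_lt ha)
  have hb0 : b ≠ 0 := by
    intro he
    rw [he] at hb
    have := hb.1
    simp at this
  exact key ha hb.1 (le_of_eq hb.2) (hm_eq_imp (Ssec_ne ha) hb0 hab h)

/- ### boundary values of hm -/

lemma hm_boundary_val {x : ℝ} (hx : 0 < x) :
    hm ((x : ℂ) * (1 + Complex.I)) = (((4 * x ^ 4 + 1) / (4 * x ^ 3) : ℝ) : ℂ) * (1 + Complex.I) := by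
  have hx0 : (x:ℂ) ≠ 0 := Complex.ofReal_ne_zero.mpr (ne_of_gt hx)
  have h3 : ((x:ℂ) * (1 + Complex.I)) ^ 3 = 2 * (x:ℂ)^3 * (-1 + Complex.I) := by
    linear_combination ((x:ℂ)^3*(3+Complex.I)) * Complex.I_sq
  have hinv : (((x:ℂ) * (1 + Complex.I)) ^ 3)⁻¹ = -(1+Complex.I)/(4*(x:ℂ)^3) := by
    apply inv_eq_of_mul_eq_one_left
    rw [h3]
    have hd : (4:ℂ)*(x:ℂ)^3 ≠ 0 := mul_ne_zero (by norm_num) (pow_ne_zero _ hx0)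
    field_simp
    linear_combination (-2) * Complex.I_sq
  rw [hm, hinv]
  have hd : (4:ℂ)*(x:ℂ)^3 ≠ 0 := mul_ne_zero (by norm_num) (pow_ne_zero _ hx0)
  push_cast
  field_simp
  ring

lemma hm_conj (v : ℂ) : hm ((starRingEnd ℂ) v) = (starRingEnd ℂ) (hm v) := by
  simp [hm, map_sub, map_inv₀, map_pow]

lemma mval_ge {x : ℝ} (hx : 0 < x) : m0 ≤ (4 * x ^ 4 + 1) / (4 * x ^ 3) := by
  have hc := c27_pos
  have hc4 := c27_pow
  have hs : Real.sqrt 2 ^ 2 = 2 := Real.sq_sqrt (by norm_num)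
  have hs0 : 0 < Real.sqrt 2 := Real.sqrt_pos.mpr (by norm_num)
  rw [m0, div_le_div_iff₀ hc (by positivity)]
  have key4 : (2 * Real.sqrt 2 * (4 * x ^ 3)) ^ (4:ℕ) ≤ ((4 * x ^ 4 + 1) * (27:ℝ) ^ ((1:ℝ)/4)) ^ (4:ℕ) := by
    have e1 : (2 * Real.sqrt 2 * (4 * x ^ 3)) ^ (4:ℕ) = 4096 * (Real.sqrt 2 ^ 2)^2 * (x^4)^3 := by ring
    have e2 : ((4 * x ^ 4 + 1) * (27:ℝ) ^ ((1:ℝ)/4)) ^ (4:ℕ)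
        = (4 * x ^ 4 + 1)^4 * (((27:ℝ) ^ ((1:ℝ)/4)) ^ (4:ℕ)) := by ring
    rw [e1, e2, hc4, hs]
    have hy : 0 < x^4 := by positivity
    nlinarith [mul_nonneg (sq_nonneg (4*x^4-3)) (by positivity : (0:ℝ) ≤ 432*(x^4)^2+56*(x^4)+3)]
  have h1 : 0 ≤ 2 * Real.sqrt 2 * (4 * x ^ 3) := by positivity
  have h2 : 0 ≤ (4 * x ^ 4 + 1) * (27:ℝ) ^ ((1:ℝ)/4) := by positivity
  exact le_of_pow_le_pow_left₀ (by norm_num) h2 key4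

lemma mval_surj {t : ℝ} (ht : m0 ≤ t) : ∃ x : ℝ, 0 < x ∧ (4 * x ^ 4 + 1) / (4 * x ^ 3) = t := by
  set x₁ : ℝ := (3/4 : ℝ) ^ ((1:ℝ)/4) with hx₁def
  have hx₁pos : 0 < x₁ := Real.rpow_pos_of_pos (by norm_num) _
  have hx₁4 : x₁ ^ (4:ℕ) = 3/4 := by
    rw [hx₁def, ← Real.rpow_natCast ((3/4:ℝ) ^ ((1:ℝ)/4)) 4,
      ← Real.rpow_mul (by norm_num : (0:ℝ) ≤ 3/4)]
    norm_num
  have hfx₁ : (4 * x₁ ^ 4 + 1) / (4 * x₁ ^ 3) = m0 := by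
    have hm4 : m0 ^ (4:ℕ) = 64/27 := by
      have hc4 := c27_pow
      have hs : Real.sqrt 2 ^ 2 = 2 := Real.sq_sqrt (by norm_num)
      rw [m0, div_pow]
      rw [show (2 * Real.sqrt 2)^(4:ℕ) = 16 * (Real.sqrt 2 ^ 2)^2 by ring, hs, hc4]
      norm_num
    have hv4 : ((4 * x₁ ^ 4 + 1) / (4 * x₁ ^ 3)) ^ (4:ℕ) = 64/27 := by
      have h3 : (x₁^3)^4 = (3/4)^3 := by
        rw [show (x₁^3)^4 = (x₁^(4:ℕ))^3 by ring, hx₁4]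
      rw [div_pow, hx₁4]
      rw [show (4 * (x₁^3))^(4:ℕ) = 256 * (x₁^3)^4 by ring, h3]
      norm_num
    have h1 : 0 ≤ (4 * x₁ ^ 4 + 1) / (4 * x₁ ^ 3) := by positivity
    have h2 : 0 ≤ m0 := le_of_lt m0_pos
    exact (pow_left_strictMonoOn₀ (by norm_num : (4:ℕ) ≠ 0)).injOn h1 h2 (by rw [hv4, hm4])
  -- IVT
  set hi : ℝ := max x₁ t with hhi
  have hx₁hi : x₁ ≤ hi := le_max_left _ _
  have hcont : ContinuousOn (fun x => (4 * x ^ 4 + 1) / (4 * x ^ 3)) (Set.Icc x₁ hi) := by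
    apply ContinuousOn.div (by fun_prop) (by fun_prop)
    intro x hx
    have : 0 < x := lt_of_lt_of_le hx₁pos hx.1
    positivity
  have hmem : t ∈ Set.Icc ((4 * x₁ ^ 4 + 1) / (4 * x₁ ^ 3)) ((4 * hi ^ 4 + 1) / (4 * hi ^ 3)) := by
    constructor
    · rw [hfx₁]; exact ht
    · have hhipos : 0 < hi := lt_of_lt_of_le hx₁pos hx₁hi
      have hthi : t ≤ hi := le_max_right _ _
      have : hi ≤ (4 * hi ^ 4 + 1) / (4 * hi ^ 3) := by
        rw [le_div_iff₀ (by positivity)]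
        nlinarith
      linarith
  obtain ⟨x, hxmem, hxval⟩ := intermediate_value_Icc hx₁hi hcont hmem
  exact ⟨x, lt_of_lt_of_le hx₁pos hxmem.1, hxval⟩

lemma conj_one_add_I (t : ℝ) :
    (starRingEnd ℂ) ((t:ℂ) * (1 + Complex.I)) = (t:ℂ) * (1 - Complex.I) := by
  rw [map_mul, Complex.conj_ofReal, map_add, map_one, Complex.conj_I]
  ring

lemma one_add_I_ne : (1 + Complex.I) ≠ 0 := by
  intro h; have := congrArg Complex.re h; simp at this

lemma one_sub_I_ne : (1 - Complex.I) ≠ 0 := by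
  intro h; have := congrArg Complex.re h; simp at this

lemma Bsec_cases {b : ℂ} (hb : b ∈ Bsec) :
    ∃ x : ℝ, 0 < x ∧ (b = (x:ℂ) * (1 + Complex.I) ∨ b = (x:ℂ) * (1 - Complex.I)) := by
  obtain ⟨h1, h2⟩ := hb
  rcases abs_eq (le_of_lt h1) |>.mp h2 with h3 | h3
  · exact ⟨b.re, h1, Or.inl (by apply Complex.ext <;> simp [h3])⟩
  · exact ⟨b.re, h1, Or.inr (by apply Complex.ext <;> simp [h3])⟩

lemma mem_Bsec_plus {x : ℝ} (hx : 0 < x) : (x:ℂ) * (1 + Complex.I) ∈ Bsec := by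
  constructor
  · simpa using hx
  · simp [abs_of_pos hx]

lemma mem_Bsec_minus {x : ℝ} (hx : 0 < x) : (x:ℂ) * (1 - Complex.I) ∈ Bsec := by
  constructor
  · simpa using hx
  · simp [abs_of_pos hx]

lemma hm_minus_val {x : ℝ} (hx : 0 < x) :
    hm ((x : ℂ) * (1 - Complex.I)) = (((4 * x ^ 4 + 1) / (4 * x ^ 3) : ℝ) : ℂ) * (1 - Complex.I) := by
  have h1 : (x:ℂ) * (1 - Complex.I) = (starRingEnd ℂ) ((x:ℂ) * (1 + Complex.I)) := by
    rw [conj_one_add_I]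
  rw [h1, hm_conj, hm_boundary_val hx, ← conj_one_add_I]

lemma hm_B_sub_R : hm '' Bsec ⊆ Rray := by
  rintro z ⟨b, hb, rfl⟩
  obtain ⟨x, hx, hcase⟩ := Bsec_cases hb
  rcases hcase with h | h
  · exact ⟨(4 * x ^ 4 + 1) / (4 * x ^ 3), mval_ge hx, Or.inl (by rw [h, hm_boundary_val hx])⟩
  · exact ⟨(4 * x ^ 4 + 1) / (4 * x ^ 3), mval_ge hx, Or.inr (by rw [h, hm_minus_val hx])⟩

lemma hm_S_notin_R {v : ℂ} (hv : v ∈ Ssec) : hm v ∉ Rray := by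
  rintro ⟨t, ht, hcase⟩
  obtain ⟨x, hx, hxval⟩ := mval_surj ht
  rcases hcase with h | h
  · exact hm_S_ne_hm_B hv (mem_Bsec_plus hx) (by rw [h, ← hxval, hm_boundary_val hx])
  · exact hm_S_ne_hm_B hv (mem_Bsec_minus hx) (by rw [h, ← hxval, hm_minus_val hx])

lemma zero_notin_R : (0:ℂ) ∉ Rray := by
  rintro ⟨t, ht, h | h⟩
  · rcases mul_eq_zero.mp h.symm with h1 | h1
    · have : t = 0 := by exact_mod_cast h1
      nlinarith [m0_pos]
    · exact one_add_I_ne h1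
  · rcases mul_eq_zero.mp h.symm with h1 | h1
    · have : t = 0 := by exact_mod_cast h1
      nlinarith [m0_pos]
    · exact one_sub_I_ne h1

lemma isOpen_Ssec : IsOpen Ssec :=
  isOpen_lt (continuous_abs.comp Complex.continuous_im) Complex.continuous_re

lemma convex_Ssec : Convex ℝ Ssec := by
  have he : Ssec = {v : ℂ | v.im - v.re < 0} ∩ {v : ℂ | -v.re - v.im < 0} := by
    ext v
    simp only [Ssec, Set.mem_setOf_eq, Set.mem_inter_iff, abs_lt]
    constructor
    · rintro ⟨h1, h2⟩; constructor <;> linarith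
    · rintro ⟨h1, h2⟩; constructor <;> linarith
  rw [he]
  apply Convex.inter
  · exact convex_halfSpace_lt
      ⟨fun a b => by simp only [Complex.add_re, Complex.add_im]; ring,
       fun c a => by simp only [Complex.smul_re, Complex.smul_im, smul_eq_mul]; ring⟩ 0
  · exact convex_halfSpace_lt
      ⟨fun a b => by simp only [Complex.add_re, Complex.add_im]; ring,
       fun c a => by simp only [Complex.smul_re, Complex.smul_im, smul_eq_mul]; ring⟩ 0

lemma one_mem_Ssec : (1:ℂ) ∈ Ssec := by simp [Ssec]

lemma hm_one : hm 1 = 0 := by simp [hm]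

lemma isOpen_hm_S : IsOpen (hm '' Ssec) := by
  have hA : AnalyticOnNhd ℂ hm Ssec := fun v hv =>
    (analyticAt_id.sub ((analyticAt_id.pow 3).inv (pow_ne_zero 3 (Ssec_ne hv))))
  rcases hA.is_constant_or_isOpen convex_Ssec.isPreconnected with ⟨c, hc⟩ | hopen
  · exfalso
    have h1 := hc 1 one_mem_Ssec
    have h2 := hc 2 (by simp [Ssec])
    rw [hm_one] at h1
    rw [show hm 2 = 2 - 8⁻¹ by norm_num [hm]] at h2
    rw [← h1] at h2
    norm_num at h2
  · exact hopen Ssec subset_rfl isOpen_Ssec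

lemma scaled_notin_R {y : ℂ} (hy : y ∉ Rray) {b : ℝ} (hb0 : 0 ≤ b) (hb1 : b ≤ 1) :
    (b:ℂ) * y ∉ Rray := by
  rintro ⟨t, ht, hcase⟩
  rcases eq_or_lt_of_le hb0 with hb' | hb'
  · rw [← hb'] at hcase
    push_cast at hcase
    simp only [zero_mul] at hcase
    exact zero_notin_R ⟨t, ht, hcase⟩
  · apply hy
    have hbC : ((b:ℝ):ℂ) ≠ 0 := Complex.ofReal_ne_zero.mpr (ne_of_gt hb')
    refine ⟨t/b, by rw [le_div_iff₀ hb']; nlinarith [m0_pos], ?_⟩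
    rcases hcase with h | h
    · left
      push_cast
      rw [div_mul_eq_mul_div, eq_div_iff hbC]
      linear_combination h
    · right
      push_cast
      rw [div_mul_eq_mul_div, eq_div_iff hbC]
      linear_combination h

lemma preconnected_Rc : IsPreconnected Rrayᶜ := by
  apply isPreconnected_of_forall (0:ℂ)
  intro y hy
  refine ⟨segment ℝ 0 y, ?_, left_mem_segment ℝ 0 y, right_mem_segment ℝ 0 y,
    (convex_segment 0 y).isPreconnected⟩
  rintro z hz
  rw [segment_eq_image'] at hz
  obtain ⟨b, hb, rfl⟩ := hz
  simp only [sub_zero, zero_add]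
  rw [show b • y = ((b:ℝ):ℂ) * y from Complex.real_smul]
  exact scaled_notin_R hy hb.1 hb.2

lemma hm_norm_lower {v : ℂ} (hv : v ≠ 0) {M : ℝ} (hM : 1 ≤ M) (h : ‖hm v‖ ≤ M) :
    (M+2)⁻¹ ≤ ‖v‖ ∧ ‖v‖ ≤ M + 2 := by
  have hv0 : 0 < ‖v‖ := norm_pos_iff.mpr hv
  have hninv : ‖(v ^ 3)⁻¹‖ = ‖v‖⁻¹^3 := by rw [norm_inv, norm_pow, inv_pow]
  constructor
  · by_contra hlt
    push_neg at hlt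
    have h1 : ‖v‖ ≤ 1 := by
      calc ‖v‖ ≤ (M+2)⁻¹ := le_of_lt hlt
        _ ≤ 1 := by rw [inv_le_one_iff₀]; right; linarith
    have h2 : M + 2 < ‖v‖⁻¹ := by
      rw [← inv_inv (M+2)]
      exact inv_strictAnti₀ (by positivity) hlt
    have h3 : M + 2 ≤ ‖v‖⁻¹^3 := by
      have hi1 : 1 ≤ ‖v‖⁻¹ := one_le_inv_iff₀.mpr ⟨hv0, h1⟩
      calc M + 2 ≤ ‖v‖⁻¹ := h2.le
        _ ≤ ‖v‖⁻¹^3 := le_self_pow₀ hi1 (by norm_num)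
    have h4 : ‖v‖⁻¹^3 - ‖v‖ ≤ ‖hm v‖ := by
      calc ‖v‖⁻¹^3 - ‖v‖ = ‖(v ^ 3)⁻¹‖ - ‖v‖ := by rw [hninv]
        _ ≤ ‖(v ^ 3)⁻¹ - v‖ := norm_sub_norm_le _ _
        _ = ‖hm v‖ := by rw [hm, ← norm_neg]; congr 1; ring
    linarith
  · by_contra hlt
    push_neg at hlt
    have h1 : 1 ≤ ‖v‖ := by linarith
    have h2 : ‖v‖⁻¹^3 ≤ 1 := by
      have h5 : ‖v‖⁻¹ ≤ 1 := inv_le_one_of_one_le₀ h1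
      have h0 : 0 ≤ ‖v‖⁻¹ := by positivity
      exact pow_le_one₀ h0 h5
    have h4 : ‖v‖ - ‖v‖⁻¹^3 ≤ ‖hm v‖ := by
      calc ‖v‖ - ‖v‖⁻¹^3 = ‖v‖ - ‖(v ^ 3)⁻¹‖ := by rw [hninv]
        _ ≤ ‖v - (v ^ 3)⁻¹‖ := norm_sub_norm_le _ _
        _ = ‖hm v‖ := rfl
    linarith

lemma continuousAt_hm {v : ℂ} (hv : v ≠ 0) : ContinuousAt hm v := by
  apply ContinuousAt.sub continuousAt_id
  exact ((continuousAt_id.pow 3).inv₀ (pow_ne_zero _ hv))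

set_option maxHeartbeats 1000000 in
lemma closure_hm_S {c : ℂ} (hc : c ∉ Rray) (hcl : c ∈ closure (hm '' Ssec)) : c ∈ hm '' Ssec := by
  obtain ⟨f, hf, hft⟩ := mem_closure_iff_seq_limit.mp hcl
  choose g hg hgf using hf
  set M : ℝ := ‖c‖ + 1 with hM
  have hM1 : 1 ≤ M := by rw [hM]; linarith [norm_nonneg c]
  obtain ⟨N, hN⟩ := Metric.tendsto_atTop.mp hft 1 one_pos
  have hbound : ∀ n, ‖hm (g (n + N))‖ ≤ M := by
    intro n
    have h1 := hN (n + N) (Nat.le_add_left _ _)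
    rw [dist_eq_norm] at h1
    have h2 : ‖f (n + N)‖ - ‖c‖ ≤ ‖f (n + N) - c‖ := norm_sub_norm_le _ _
    rw [hgf]
    linarith
  set K : Set ℂ := Metric.closedBall 0 (M + 2) ∩ {v : ℂ | (M+2)⁻¹ ≤ ‖v‖} with hK
  have hKcomp : IsCompact K :=
    (isCompact_closedBall _ _).inter_right (isClosed_le continuous_const continuous_norm)
  have hgK : ∀ n, g (n + N) ∈ K := by
    intro n
    obtain ⟨hlo, hhi⟩ := hm_norm_lower (Ssec_ne (hg (n + N))) hM1 (hbound n)
    exact ⟨Metric.mem_closedBall.mpr (by rwa [dist_zero_right]), hlo⟩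
  obtain ⟨v, hvK, φ, hφ, hφt⟩ := hKcomp.tendsto_subseq hgK
  have hv0 : v ≠ 0 := by
    intro h
    have := hvK.2
    rw [h] at this
    simp only [Set.mem_setOf_eq, norm_zero] at this
    have : (0:ℝ) < (M+2)⁻¹ := by positivity
    linarith
  -- hm (g (φ n + N)) tends to both hm v and c
  have ht1 : Tendsto (fun n => hm (g (φ n + N))) atTop (nhds (hm v)) :=
    ((continuousAt_hm hv0).tendsto).comp hφt
  have ht2 : Tendsto (fun n => hm (g (φ n + N))) atTop (nhds c) := by
    have : Tendsto (fun n => f (φ n + N)) atTop (nhds c) :=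
      hft.comp ((tendsto_add_atTop_nat N).comp hφ.tendsto_atTop)
    simpa [hgf] using this
  have hvc : hm v = c := tendsto_nhds_unique ht1 ht2
  -- v is in the closed sector
  have hvre : |v.im| ≤ v.re := by
    have h1 : Tendsto (fun n => (g (φ n + N)).re) atTop (nhds v.re) :=
      (Complex.continuous_re.continuousAt.tendsto).comp hφt
    have h2 : Tendsto (fun n => |(g (φ n + N)).im|) atTop (nhds |v.im|) :=
      ((continuous_abs.comp Complex.continuous_im).continuousAt.tendsto).comp hφt
    exact le_of_tendsto_of_tendsto' h2 h1 (fun n => le_of_lt (hg (φ n + N)))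
  rcases eq_or_lt_of_le hvre with he | hlt
  · exfalso
    have hvre0 : 0 < v.re := by
      rcases lt_or_eq_of_le (le_trans (abs_nonneg _) hvre) with h | h
      · exact h
      · exfalso
        apply hv0
        have h1 : |v.im| = 0 := by rw [he, ← h]
        apply Complex.ext
        · exact h.symm
        · simpa using h1
    exact hc (hvc ▸ hm_B_sub_R ⟨v, ⟨hvre0, he⟩, rfl⟩)
  · exact ⟨v, hlt, hvc⟩

lemma hm_S_eq : hm '' Ssec = Rrayᶜ := by
  apply Set.Subset.antisymm
  · rintro z ⟨v, hv, rfl⟩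
    exact hm_S_notin_R hv
  · apply preconnected_Rc.subset_left_of_subset_union isOpen_hm_S
      isClosed_closure.isOpen_compl
    · exact disjoint_compl_right.mono_left subset_closure
    · intro z hz
      by_cases h : z ∈ closure (hm '' Ssec)
      · exact Or.inl (closure_hm_S hz h)
      · exact Or.inr h
    · exact ⟨0, zero_notin_R, ⟨1, one_mem_Ssec, hm_one⟩⟩

/- ### square-root bridging -/

lemma cpow_half_re_nonneg (u : ℂ) : 0 ≤ (u ^ ((1 : ℂ) / 2)).re := by
  by_cases hu : u = 0
  · rw [hu, Complex.zero_cpow (by norm_num)]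
    simp
  · rw [Complex.cpow_def_of_ne_zero hu]
    rw [Complex.exp_re]
    apply mul_nonneg (le_of_lt (Real.exp_pos _))
    have him : (Complex.log u * ((1:ℂ)/2)).im = u.arg / 2 := by
      rw [Complex.mul_im]
      simp [Complex.log_im, Complex.log_re]
      ring
    rw [him]
    apply Real.cos_nonneg_of_mem_Icc
    constructor
    · linarith [Complex.neg_pi_lt_arg u]
    · linarith [Complex.arg_le_pi u]

lemma cpow_half_sq {u : ℂ} (hu : u ≠ 0) : (u ^ ((1 : ℂ) / 2)) ^ 2 = u := by
  rw [sq, ← Complex.cpow_add _ _ hu]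
  norm_num

lemma sq_cpow_half {v : ℂ} (hv : 0 < v.re) : (v ^ 2) ^ ((1 : ℂ) / 2) = v := by
  have hv0 : v ≠ 0 := by intro h; rw [h] at hv; simp at hv
  have h2 : ((v ^ 2) ^ ((1 : ℂ) / 2)) ^ 2 = v ^ 2 := cpow_half_sq (pow_ne_zero _ hv0)
  have h3 : ((v ^ 2) ^ ((1 : ℂ) / 2) - v) * ((v ^ 2) ^ ((1 : ℂ) / 2) + v) = 0 := by
    linear_combination h2
  rcases mul_eq_zero.mp h3 with h4 | h4
  · exact sub_eq_zero.mp h4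
  · exfalso
    have h5 : (v ^ 2) ^ ((1 : ℂ) / 2) = -v := by linear_combination h4
    have h6 := cpow_half_re_nonneg (v ^ 2)
    rw [h5] at h6
    simp only [Complex.neg_re] at h6
    linarith

/- ### the maps u and v, and membership -/

def uf (w : ℂ) : ℂ := (w - 1) / (w + 1)
def vf (w : ℂ) : ℂ := uf w ^ ((1 : ℂ) / 2)

lemma wp1_ne {w : ℂ} (hw : 1 < ‖w‖) : w + 1 ≠ 0 := by
  intro h
  have : w = -1 := by linear_combination h
  rw [this] at hw
  simp at hw

lemma wm1_ne {w : ℂ} (hw : 1 < ‖w‖) : w - 1 ≠ 0 := by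
  intro h
  have : w = 1 := by linear_combination h
  rw [this] at hw
  simp at hw

lemma w_ne {w : ℂ} (hw : 1 < ‖w‖) : w ≠ 0 := by
  intro h
  rw [h] at hw
  simp only [norm_zero] at hw
  linarith

lemma uf_ne {w : ℂ} (hw : 1 < ‖w‖) : uf w ≠ 0 :=
  div_ne_zero (wm1_ne hw) (wp1_ne hw)

lemma uf_re_pos {w : ℂ} (hw : 1 < ‖w‖) : 0 < (uf w).re := by
  have hN : 0 < Complex.normSq (w+1) := Complex.normSq_pos.mpr (wp1_ne hw)
  have key : ((w - 1).re * (w + 1).re + (w - 1).im * (w + 1).im) = Complex.normSq w - 1 := by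
    simp [Complex.normSq_apply]
    ring
  have h2 : 1 < Complex.normSq w := by
    rw [← Complex.sq_norm]
    nlinarith
  rw [uf, Complex.div_re, ← add_div, key]
  exact div_pos (by linarith) hN

lemma vf_mem_S {w : ℂ} (hw : 1 < ‖w‖) : vf w ∈ Ssec := by
  have h1 : 0 ≤ (vf w).re := cpow_half_re_nonneg _
  have h2 : (vf w) ^ 2 = uf w := cpow_half_sq (uf_ne hw)
  have h3 : (uf w).re = (vf w).re ^ 2 - (vf w).im ^ 2 := by
    rw [← h2, pow_two, Complex.mul_re]
    ring
  have h4 := uf_re_pos hw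
  have h5 : (vf w).im ^ 2 < (vf w).re ^ 2 := by
    rw [h3] at h4
    linarith
  show |(vf w).im| < (vf w).re
  nlinarith [abs_nonneg (vf w).im, sq_abs (vf w).im]

lemma psi0_eq {w : ℂ} : psi0 w = (w - 1 / w) * vf w := rfl

lemma psi0_mul_hm {w : ℂ} (hw : 1 < ‖w‖) : psi0 w * hm (vf w) = -4 := by
  have hu : uf w ≠ 0 := uf_ne hw
  have hsq : (vf w) ^ 2 = uf w := cpow_half_sq hu
  have hv : vf w ≠ 0 := by
    intro h
    rw [h] at hsq
    simp at hsq
    exact hu hsq.symm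
  have hexp : vf w * (vf w - ((vf w) ^ 3)⁻¹) = uf w - (uf w)⁻¹ := by
    rw [← hsq]
    field_simp
  rw [psi0_eq, hm, mul_assoc, hexp, uf]
  have h1 := wp1_ne hw
  have h2 := wm1_ne hw
  have h3 := w_ne hw
  field_simp
  ring

lemma psi0_ne_zero {w : ℂ} (hw : 1 < ‖w‖) : psi0 w ≠ 0 := by
  intro h
  have := psi0_mul_hm hw
  rw [h, zero_mul] at this
  norm_num at this

lemma hm_vf_ne_zero {w : ℂ} (hw : 1 < ‖w‖) : hm (vf w) ≠ 0 := by
  intro h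
  have := psi0_mul_hm hw
  rw [h, mul_zero] at this
  norm_num at this

/- ### gamma0 and final assembly -/

lemma L_pos : 0 < (27 : ℝ) ^ ((1 : ℝ) / 4) / Real.sqrt 2 := by
  apply div_pos c27_pos (Real.sqrt_pos.mpr (by norm_num))

lemma m0_L : m0 * ((27 : ℝ) ^ ((1 : ℝ) / 4) / Real.sqrt 2) = 2 := by
  rw [m0]
  have h1 := c27_pos
  have h2 : Real.sqrt 2 ≠ 0 := ne_of_gt (Real.sqrt_pos.mpr (by norm_num))
  have hs : Real.sqrt 2 * Real.sqrt 2 = 2 := Real.mul_self_sqrt (by norm_num)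
  field_simp

lemma prod_plus (x : ℝ) (hx : x ≠ 0) :
    ((-1 + Complex.I) * (x:ℂ)) * (((2/x:ℝ):ℂ) * (1 + Complex.I)) = -4 := by
  have hxC : (x:ℂ) ≠ 0 := Complex.ofReal_ne_zero.mpr hx
  push_cast
  field_simp
  linear_combination 2 * Complex.I_sq

lemma prod_minus (x : ℝ) (hx : x ≠ 0) :
    ((-1 - Complex.I) * (x:ℂ)) * (((2/x:ℝ):ℂ) * (1 - Complex.I)) = -4 := by
  have hxC : (x:ℂ) ≠ 0 := Complex.ofReal_ne_zero.mpr hx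
  push_cast
  field_simp
  linear_combination 2 * Complex.I_sq

lemma prod_plus' (t : ℝ) (ht : t ≠ 0) :
    ((-1 + Complex.I) * ((2/t:ℝ):ℂ)) * ((t:ℂ) * (1 + Complex.I)) = -4 := by
  have h := prod_plus t ht
  push_cast at h ⊢
  linear_combination h

lemma prod_minus' (t : ℝ) (ht : t ≠ 0) :
    ((-1 - Complex.I) * ((2/t:ℝ):ℂ)) * ((t:ℂ) * (1 - Complex.I)) = -4 := by
  have h := prod_minus t ht
  push_cast at h ⊢
  linear_combination h

lemma psi0_notin_gamma0 {w : ℂ} (hw : 1 < ‖w‖) : psi0 w ∉ gamma0 := by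
  intro hmem
  set L := (27 : ℝ) ^ ((1 : ℝ) / 4) / Real.sqrt 2 with hLdef
  have hz0 : psi0 w ≠ 0 := psi0_ne_zero hw
  have hR := hm_S_notin_R (vf_mem_S hw)
  have hLm0 := m0_L
  have hL : 0 < L := L_pos
  have hm02 : m0 = 2 / L := by rw [eq_div_iff (ne_of_gt hL)]; exact hLm0
  apply hR
  rcases hmem with ⟨x, hxI, hxe⟩ | ⟨x, hxI, hxe⟩
  · have hx0 : x ≠ 0 := by
      intro h; rw [h] at hxe; simp at hxe; exact hz0 hxe.symm
    have hxpos : 0 < x := lt_of_le_of_ne hxI.1 (Ne.symm hx0)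
    refine ⟨2/x, ?_, Or.inl ?_⟩
    · rw [hm02, div_le_div_iff₀ hL hxpos]
      nlinarith [hxI.2]
    · apply mul_left_cancel₀ hz0
      rw [psi0_mul_hm hw, ← hxe, prod_plus x hx0]
  · have hx0 : x ≠ 0 := by
      intro h; rw [h] at hxe; simp at hxe; exact hz0 hxe.symm
    have hxpos : 0 < x := lt_of_le_of_ne hxI.1 (Ne.symm hx0)
    refine ⟨2/x, ?_, Or.inr ?_⟩
    · rw [hm02, div_le_div_iff₀ hL hxpos]
      nlinarith [hxI.2]
    · apply mul_left_cancel₀ hz0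
      rw [psi0_mul_hm hw, ← hxe, prod_minus x hx0]

lemma surj_gamma0 {z : ℂ} (hz : z ∉ gamma0) : ∃ w : ℂ, 1 < ‖w‖ ∧ psi0 w = z := by
  set L := (27 : ℝ) ^ ((1 : ℝ) / 4) / Real.sqrt 2 with hLdef
  have hL : 0 < L := L_pos
  have hLm0 := m0_L
  have hz0 : z ≠ 0 := by
    intro h
    apply hz
    left
    exact ⟨0, ⟨le_refl _, le_of_lt hL⟩, by rw [h]; simp⟩
  set c : ℂ := -4 / z with hcdef
  have hc0 : c ≠ 0 := div_ne_zero (by norm_num) hz0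
  have hzc : z * c = -4 := by rw [hcdef]; field_simp
  have hcR : c ∉ Rray := by
    rintro ⟨t, ht, hc | hc⟩
    · have ht0 : 0 < t := lt_of_lt_of_le m0_pos ht
      apply hz
      left
      refine ⟨2/t, ⟨by positivity, ?_⟩, ?_⟩
      · rw [div_le_iff₀ ht0]; nlinarith
      · apply mul_right_cancel₀ hc0
        rw [hzc, hc]
        exact prod_plus' t (ne_of_gt ht0)
    · have ht0 : 0 < t := lt_of_lt_of_le m0_pos ht
      apply hz
      right
      refine ⟨2/t, ⟨by positivity, ?_⟩, ?_⟩
      · rw [div_le_iff₀ ht0]; nlinarith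
      · apply mul_right_cancel₀ hc0
        rw [hzc, hc]
        exact prod_minus' t (ne_of_gt ht0)
  have hcS : c ∈ hm '' Ssec := by rw [hm_S_eq]; exact hcR
  obtain ⟨v, hv, hvc⟩ := hcS
  have hv1 : v ≠ 1 := by
    intro h
    rw [h, hm_one] at hvc
    exact hc0 hvc.symm
  set u : ℂ := v ^ 2 with hudef
  have hure : 0 < u.re := by
    have h3 : u.re = v.re ^ 2 - v.im ^ 2 := by
      rw [hudef, pow_two, Complex.mul_re]; ring
    have h5 : |v.im| < v.re := hv
    have h6 : 0 ≤ |v.im| := abs_nonneg _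
    rw [h3]
    nlinarith [sq_abs v.im]
  have hu1 : (1:ℂ) - u ≠ 0 := by
    intro h
    have h2 : u = 1 := by linear_combination -h
    have h3 : (v - 1) * (v + 1) = 0 := by
      rw [hudef] at h2; linear_combination h2
    rcases mul_eq_zero.mp h3 with h4 | h4
    · exact hv1 (sub_eq_zero.mp h4)
    · have h5 : v = -1 := by linear_combination h4
      have := Ssec_re hv
      rw [h5] at this
      simp at this
      linarith
  set w : ℂ := (1 + u) / (1 - u) with hwdef
  have hwp1 : w + 1 = 2 / (1 - u) := by
    rw [hwdef, div_add' _ _ _ hu1, div_eq_div_iff hu1 hu1]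
    ring
  have hwp1ne : w + 1 ≠ 0 := by
    rw [hwp1]; exact div_ne_zero (by norm_num) hu1
  have habs : 1 < ‖w‖ := by
    have hnormsq : Complex.normSq (1 + u) - Complex.normSq (1 - u) = 4 * u.re := by
      simp only [Complex.normSq_apply, Complex.add_re, Complex.add_im, Complex.sub_re,
        Complex.sub_im, Complex.one_re, Complex.one_im]
      ring
    have h1 : ‖1 - u‖ < ‖1 + u‖ := by
      have e1 := Complex.sq_norm (1 - u)
      have e2 := Complex.sq_norm (1 + u)
      nlinarith [norm_nonneg (1 - u), norm_nonneg (1 + u)]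
    have h2 : 0 < ‖1 - u‖ := norm_pos_iff.mpr (fun h => hu1 h)
    rw [hwdef, norm_div]
    exact (one_lt_div h2).mpr h1
  have hufw : uf w = u := by
    rw [uf, div_eq_iff hwp1ne, hwp1, hwdef]
    field_simp
    ring
  have hvfw : vf w = v := by
    rw [vf, hufw, hudef]
    exact sq_cpow_half (Ssec_re hv)
  refine ⟨w, habs, ?_⟩
  have hfin := psi0_mul_hm habs
  rw [hvfw, hvc, hcdef] at hfin
  field_simp at hfin
  linear_combination -hfin

lemma part1 : ∀ w : ℂ, 1 < ‖w‖ → DifferentiableAt ℂ psi0 w := by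
  intro w hw
  have h1 : DifferentiableAt ℂ (fun w : ℂ => w - 1 / w) w :=
    differentiableAt_id.sub ((differentiableAt_const 1).div differentiableAt_id (w_ne hw))
  have h2 : DifferentiableAt ℂ (fun w : ℂ => ((w - 1) / (w + 1)) ^ ((1 : ℂ) / 2)) w := by
    apply DifferentiableAt.cpow
    · exact (differentiableAt_id.sub (differentiableAt_const 1)).div
        (differentiableAt_id.add (differentiableAt_const 1)) (wp1_ne hw)
    · exact differentiableAt_const _
    · exact Complex.mem_slitPlane_iff.mpr (Or.inl (uf_re_pos hw))
  exact h1.mul h2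

lemma part2 : Set.InjOn psi0 {w : ℂ | 1 < ‖w‖} := by
  intro w1 h1 w2 h2 heq
  simp only [Set.mem_setOf_eq] at h1 h2
  have e1 := psi0_mul_hm h1
  have e2 := psi0_mul_hm h2
  rw [heq] at e1
  have hne := psi0_ne_zero h2
  have hmeq : hm (vf w1) = hm (vf w2) := mul_left_cancel₀ hne (by rw [e1, e2])
  have hveq : vf w1 = vf w2 := hm_inj (vf_mem_S h1) (vf_mem_S h2) hmeq
  have hueq : uf w1 = uf w2 := by
    rw [← cpow_half_sq (uf_ne h1), ← cpow_half_sq (uf_ne h2)]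
    show (vf w1) ^ 2 = (vf w2) ^ 2
    rw [hveq]
  rw [uf, uf, div_eq_div_iff (wp1_ne h1) (wp1_ne h2)] at hueq
  linear_combination hueq / 2

lemma part3 : psi0 '' {w : ℂ | 1 < ‖w‖} = gamma0ᶜ := by
  ext z
  constructor
  · rintro ⟨w, hw, rfl⟩
    exact psi0_notin_gamma0 hw
  · intro hz
    obtain ⟨w, hw, hwz⟩ := surj_gamma0 hz
    exact ⟨w, hw, hwz⟩

lemma part4 : Filter.Tendsto (fun w : ℂ => psi0 w / w) (Filter.comap (fun z : ℂ => ‖z‖) Filter.atTop)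
    (nhds 1) := by
  set l := Filter.comap (fun z : ℂ => ‖z‖) Filter.atTop with hl
  have htc : Tendsto (fun z : ℂ => ‖z‖) l atTop := tendsto_comap
  have hev : ∀ᶠ w : ℂ in l, 2 ≤ ‖w‖ := htc.eventually (eventually_ge_atTop 2)
  -- uf w → 1
  have hu1 : Tendsto (fun w : ℂ => uf w) l (nhds 1) := by
    have hstep : Tendsto (fun w : ℂ => uf w - 1) l (nhds 0) := by
      apply squeeze_zero_norm' (a := fun w => 2 / (‖w‖ - 1))
      · filter_upwards [hev] with w hw
        have hwp : w + 1 ≠ 0 := wp1_ne (by linarith)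
        have he : uf w - 1 = -2 / (w + 1) := by
          rw [uf, div_sub_one hwp]
          congr 1
          ring
        rw [he]
        rw [norm_div, norm_neg]
        have hb : ‖w‖ - 1 ≤ ‖w + 1‖ := by
          have := norm_add_le (w + 1) (-1)
          simp only [norm_neg, norm_one] at this
          calc ‖w‖ - 1 = ‖w + 1 + -1‖ - 1 := by ring_nf
            _ ≤ ‖w + 1‖ + ‖(-1:ℂ)‖ - 1 := by
                have := norm_add_le (w + 1) (-1)
                linarith
            _ = ‖w + 1‖ := by simp
        have hpos : 0 < ‖w‖ - 1 := by linarith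
        rw [show ‖(2:ℂ)‖ = 2 by norm_num]
        show (2:ℝ) / ‖w + 1‖ ≤ 2 / (‖w‖ - 1)
        apply div_le_div_of_nonneg_left (by norm_num) hpos hb
      · have houter : Tendsto (fun r : ℝ => 2 / (r - 1)) atTop (nhds 0) :=
          Tendsto.div_atTop tendsto_const_nhds (tendsto_atTop_add_const_right _ (-1) tendsto_id)
        exact houter.comp htc
    have := hstep.add (tendsto_const_nhds (x := (1:ℂ)))
    simpa using this
  -- vf w → 1
  have hv1 : Tendsto (fun w : ℂ => vf w) l (nhds 1) := by
    have hcont : ContinuousAt (fun x : ℂ => x ^ ((1:ℂ)/2)) 1 :=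
      continuousAt_cpow_const (Complex.mem_slitPlane_iff.mpr (Or.inl (by norm_num)))
    have := hcont.tendsto.comp hu1
    rw [Complex.one_cpow] at this
    exact this
  -- (1 - (w^2)⁻¹) → 1
  have hw1 : Tendsto (fun w : ℂ => 1 - (w^2)⁻¹) l (nhds 1) := by
    have hstep : Tendsto (fun w : ℂ => (w^2)⁻¹) l (nhds 0) := by
      apply squeeze_zero_norm' (a := fun w => (‖w‖)⁻¹)
      · filter_upwards [hev] with w hw
        rw [norm_inv, norm_pow]
        show ((‖w‖) ^ 2)⁻¹ ≤ (‖w‖)⁻¹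
        rw [inv_le_inv₀ (by nlinarith) (by linarith)]
        nlinarith
      · exact tendsto_inv_atTop_zero.comp htc
    have := (tendsto_const_nhds (x := (1:ℂ))).sub hstep
    simpa using this
  have hmul := hw1.mul hv1
  rw [show (1:ℂ) * 1 = 1 by norm_num] at hmul
  apply hmul.congr'
  filter_upwards [hev] with w hw
  have hw0 : w ≠ 0 := w_ne (by linarith)
  rw [psi0_eq]
  show (1 - (w^2)⁻¹) * vf w = (w - 1/w) * vf w / w
  field_simp


end AuxPsi0

/-- `ψ₀` is holomorphic and injective on `{|w| > 1}`, its image is `ℂ ∖ γ₀`,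
and `ψ₀(w)/w → 1` as `|w| → ∞`. -/
theorem stmt1 :
    (∀ w : ℂ, 1 < ‖w‖ → DifferentiableAt ℂ psi0 w) ∧
    Set.InjOn psi0 {w : ℂ | 1 < ‖w‖} ∧
    psi0 '' {w : ℂ | 1 < ‖w‖} = gamma0ᶜ ∧
    Filter.Tendsto (fun w : ℂ => psi0 w / w) (Filter.comap (fun z : ℂ => ‖z‖) Filter.atTop)
      (nhds 1) := ⟨part1, part2, part3, part4⟩
end
end

section
/- For all s, t ∈ (0, π): ψ₀(e^{is}) = ψ₀(e^{it}) if and only if sin(s)·sin²(s/2) = sin(t)·sin²(t/2). -/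
noncomputable section

open Real

lemma aux_cpow (r : ℝ) (hr : 0 < r) :
    ((r : ℂ) * Complex.I) ^ ((1:ℂ)/2) =
    (Real.sqrt r : ℂ) * Complex.exp (Complex.I * ((Real.pi/4 : ℝ) : ℂ)) := by
  have hne : (r:ℂ) * Complex.I ≠ 0 := by
    apply mul_ne_zero _ Complex.I_ne_zero
    exact_mod_cast hr.ne'
  have h1 : (r:ℂ) * Complex.I = Complex.exp (↑(Real.log r) + ↑(Real.pi/2) * Complex.I) := by
    rw [Complex.exp_add, Complex.exp_mul_I]
    rw [← Complex.ofReal_cos, ← Complex.ofReal_sin, Real.cos_pi_div_two, Real.sin_pi_div_two,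
        ← Complex.ofReal_exp, Real.exp_log hr]
    simp
  have him : (↑(Real.log r) + ↑(Real.pi/2) * Complex.I).im = Real.pi/2 := by simp
  have h2 : Complex.log ((r:ℂ) * Complex.I) = ↑(Real.log r) + ↑(Real.pi/2) * Complex.I := by
    rw [h1, Complex.log_exp (by rw [him]; linarith [Real.pi_pos])
      (by rw [him]; linarith [Real.pi_pos])]
  rw [Complex.cpow_def_of_ne_zero hne, h2]
  have h3 : (↑(Real.log r) + ↑(Real.pi/2) * Complex.I) * ((1:ℂ)/2)
      = ↑(Real.log (Real.sqrt r)) + Complex.I * ↑(Real.pi/4) := by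
    rw [Real.log_sqrt hr.le]; push_cast; ring
  rw [h3, Complex.exp_add, ← Complex.ofReal_exp, Real.exp_log (Real.sqrt_pos.2 hr)]

lemma aux_psi (s : ℝ) (hs : s ∈ Set.Ioo 0 Real.pi) :
    psi0 (Complex.exp (Complex.I * s)) =
    ((2 * (Real.sin s * Real.sqrt (Real.tan (s/2))) : ℝ) : ℂ) *
      (Complex.I * Complex.exp (Complex.I * ((Real.pi/4 : ℝ) : ℂ))) := by
  obtain ⟨hs0, hsπ⟩ := hs
  have hcos : Real.cos (s/2) > 0 :=
    Real.cos_pos_of_mem_Ioo ⟨by linarith [Real.pi_pos], by linarith⟩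
  have htan : Real.tan (s/2) > 0 :=
    Real.tan_pos_of_pos_of_lt_pi_div_two (by linarith) (by linarith)
  have hh2 : Complex.exp (Complex.I * ((s:ℂ)/2)) * Complex.exp (Complex.I * ((s:ℂ)/2))
      = Complex.exp (Complex.I * s) := by
    rw [← Complex.exp_add]; ring_nf
  have hhne : Complex.exp (Complex.I * ((s:ℂ)/2)) ≠ 0 := Complex.exp_ne_zero _
  have h1 : Complex.exp (Complex.I * s) - 1 / Complex.exp (Complex.I * s)
      = 2 * Complex.I * (Real.sin s : ℂ) := by
    rw [one_div, ← Complex.exp_neg, Complex.ofReal_sin, Complex.sin]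
    ring_nf
    rw [Complex.I_sq]
    ring_nf
  have hd1 : Complex.exp (Complex.I * ((s:ℂ)/2)) - 1 / Complex.exp (Complex.I * ((s:ℂ)/2))
      = 2 * Complex.I * (Real.sin (s/2) : ℂ) := by
    rw [one_div, ← Complex.exp_neg, Complex.ofReal_sin, Complex.sin]
    push_cast
    ring_nf
    rw [Complex.I_sq]
    ring_nf
  have hd2 : Complex.exp (Complex.I * ((s:ℂ)/2)) + 1 / Complex.exp (Complex.I * ((s:ℂ)/2))
      = 2 * (Real.cos (s/2) : ℂ) := by
    rw [one_div, ← Complex.exp_neg, Complex.ofReal_cos, Complex.cos]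
    push_cast
    ring_nf
  have hnum : Complex.exp (Complex.I * s) - 1
      = Complex.exp (Complex.I * ((s:ℂ)/2)) * (2 * Complex.I * (Real.sin (s/2) : ℂ)) := by
    rw [← hd1, mul_sub, mul_one_div, div_self hhne, hh2]
  have hden : Complex.exp (Complex.I * s) + 1
      = Complex.exp (Complex.I * ((s:ℂ)/2)) * (2 * (Real.cos (s/2) : ℂ)) := by
    rw [← hd2, mul_add, mul_one_div, div_self hhne, hh2]
  have hcosne : ((Real.cos (s/2) : ℂ)) ≠ 0 := by exact_mod_cast hcos.ne'
  have h2 : (Complex.exp (Complex.I * s) - 1) / (Complex.exp (Complex.I * s) + 1)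
      = (Real.tan (s/2) : ℂ) * Complex.I := by
    rw [hnum, hden, mul_div_mul_left _ _ hhne, Complex.ofReal_tan, Complex.tan_eq_sin_div_cos,
        ← Complex.ofReal_sin, ← Complex.ofReal_cos]
    field_simp
  rw [psi0, h1, h2, aux_cpow _ htan]
  push_cast
  ring

lemma aux_sq (u : ℝ) (hu : u ∈ Set.Ioo 0 Real.pi) :
    (Real.sin u * Real.sqrt (Real.tan (u/2))) ^ 2
      = 2 * (Real.sin u * Real.sin (u/2) ^ 2) := by
  obtain ⟨hu0, huπ⟩ := hu
  have hcos : Real.cos (u/2) > 0 :=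
    Real.cos_pos_of_mem_Ioo ⟨by linarith [Real.pi_pos], by linarith⟩
  have htan : Real.tan (u/2) > 0 :=
    Real.tan_pos_of_pos_of_lt_pi_div_two (by linarith) (by linarith)
  have hsin : Real.sin u = 2 * Real.sin (u/2) * Real.cos (u/2) := by
    have h := Real.sin_two_mul (u/2)
    rwa [show 2 * (u/2) = u by ring] at h
  rw [mul_pow, Real.sq_sqrt htan.le, Real.tan_eq_sin_div_cos, hsin]
  field_simp

/-- For `s, t ∈ (0, π)`: `ψ₀(e^{is}) = ψ₀(e^{it})` iff
`sin s · sin²(s/2) = sin t · sin²(t/2)`. -/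
theorem stmt2 (s t : ℝ) (hs : s ∈ Set.Ioo 0 Real.pi) (ht : t ∈ Set.Ioo 0 Real.pi) :
    psi0 (Complex.exp (Complex.I * (s : ℂ))) = psi0 (Complex.exp (Complex.I * (t : ℂ))) ↔
    Real.sin s * Real.sin (s / 2) ^ 2 = Real.sin t * Real.sin (t / 2) ^ 2 := by
  have hc : (Complex.I * Complex.exp (Complex.I * ((Real.pi/4 : ℝ) : ℂ))) ≠ 0 :=
    mul_ne_zero Complex.I_ne_zero (Complex.exp_ne_zero _)
  have hFs : 0 ≤ Real.sin s * Real.sqrt (Real.tan (s/2)) :=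
    mul_nonneg (Real.sin_nonneg_of_nonneg_of_le_pi hs.1.le hs.2.le) (Real.sqrt_nonneg _)
  have hFt : 0 ≤ Real.sin t * Real.sqrt (Real.tan (t/2)) :=
    mul_nonneg (Real.sin_nonneg_of_nonneg_of_le_pi ht.1.le ht.2.le) (Real.sqrt_nonneg _)
  rw [aux_psi s hs, aux_psi t ht]
  constructor
  · intro h
    have h2 := mul_right_cancel₀ hc h
    have h3 : 2 * (Real.sin s * Real.sqrt (Real.tan (s/2)))
        = 2 * (Real.sin t * Real.sqrt (Real.tan (t/2))) := by exact_mod_cast h2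
    have h4 : Real.sin s * Real.sqrt (Real.tan (s/2))
        = Real.sin t * Real.sqrt (Real.tan (t/2)) := by linarith
    have h5 := congrArg (· ^ 2) h4
    rw [aux_sq s hs, aux_sq t ht] at h5
    linarith
  · intro h
    have h5 : (Real.sin s * Real.sqrt (Real.tan (s/2))) ^ 2
        = (Real.sin t * Real.sqrt (Real.tan (t/2))) ^ 2 := by
      rw [aux_sq s hs, aux_sq t ht]; linarith
    have h4 : Real.sin s * Real.sqrt (Real.tan (s/2))
        = Real.sin t * Real.sqrt (Real.tan (t/2)) := by
      rw [← Real.sqrt_sq hFs, ← Real.sqrt_sq hFt, h5]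
    rw [h4]
end
end

section
/- For every t ∈ [2π/3, π), set r(t) := ∛( (1 − sin²(t/2))·(2 + 5·sin²(t/2) + 20·sin⁴(t/2) + sin²(t/2)·√(27·(3 + 8·sin²(t/2) + 16·sin⁴(t/2)))) / 2 ). Then J(t) = 2·arcsin( √( ((1 − sin²(t/2))·(1 + (1 + 2·sin²(t/2))/r(t)) + r(t)) / 3 ) ). -/
noncomputable section

open Real

/-- The auxiliary quantity `r(t)`. -/
def rAux (t : ℝ) : ℝ :=
  ((1 - Real.sin (t / 2) ^ 2) *
    (2 + 5 * Real.sin (t / 2) ^ 2 + 20 * Real.sin (t / 2) ^ 4 +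
      Real.sin (t / 2) ^ 2 *
        Real.sqrt (27 * (3 + 8 * Real.sin (t / 2) ^ 2 + 16 * Real.sin (t / 2) ^ 4))) / 2)
  ^ ((1 : ℝ) / 3)

private lemma cube_aux (c u sq r : ℝ)
    (hsq : sq^2 = 27*(3+8*c+16*c^2))
    (hr3 : r^3 = (1-c)*(2+5*c+20*c^2+c*sq)/2) (hr0 : 0 < r)
    (hu : u = ((1-c)*(1+(1+2*c)/r)+r)/3) :
    u^3 = (1-c)*(u^2+c*u+c^2) := by
  have hrne : r ≠ 0 := ne_of_gt hr0
  have key : r^6 - (1-c)*(2+5*c+20*c^2)*r^3 + (1-c)^3*(1+2*c)^3 = 0 := by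
    linear_combination (r^3 + (1-c)*(2+5*c+20*c^2+c*sq)/2 - (1-c)*(2+5*c+20*c^2)) * hr3
      + ((1-c)^2*c^2/4) * hsq
  have hu' : 3*r*u = (1-c)*(r+1+2*c)+r^2 := by
    rw [hu]; field_simp; ring
  set A := (1-c)*(r+1+2*c)+r^2 with hA
  have main : A^3 - 3*r*(1-c)*A^2 - 9*r^2*c*(1-c)*A - 27*r^3*c^2*(1-c) = 0 := by
    rw [hA]; linear_combination key
  have h27 : 27*r^3*(u^3 - (1-c)*(u^2+c*u+c^2)) = 0 := by
    linear_combination main + ((3*r*u)^2 + 3*r*u*A + A^2 - 3*r*(1-c)*(3*r*u+A) - 9*r^2*c*(1-c)) * hu'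
  have h27' : (27*r^3) ≠ 0 := by positivity
  have := (mul_eq_zero.mp h27).resolve_left h27'
  linarith

private lemma le_34_aux (c u : ℝ) (hc1 : 3/4 ≤ c)
    (hP : u^3 = (1-c)*(u^2+c*u+c^2)) : u ≤ 3/4 := by
  by_contra hcon
  push_neg at hcon
  have ha : 0 < u - 3/4 := by linarith
  have hb : 0 ≤ c - 3/4 := by linarith
  nlinarith [mul_pos ha ha, mul_nonneg hb hb, mul_pos (mul_pos ha ha) ha,
    mul_nonneg (mul_nonneg hb hb) hb, mul_nonneg hb ha.le,
    mul_nonneg (mul_nonneg ha.le ha.le) hb, mul_nonneg (mul_nonneg hb hb) ha.le]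

private lemma mono_aux (v w : ℝ) (hv0 : 0 ≤ v) (hw : w ≤ 3/4) (hvw : v < w) :
    v^3*(1-v) < w^3*(1-w) := by
  have hw0 : 0 ≤ w := le_of_lt (lt_of_le_of_lt hv0 hvw)
  have hB : 0 < v^2+v*w+w^2 - (v+w)*(v^2+w^2) := by
    nlinarith [mul_nonneg (sq_nonneg v) (show (0:ℝ) ≤ 3-4*v by linarith),
      mul_nonneg (sq_nonneg w) (show (0:ℝ) ≤ 3-4*w by linarith),
      mul_pos (sub_pos.mpr hvw) (sub_pos.mpr hvw),
      mul_nonneg (mul_nonneg hv0 hw0) (show (0:ℝ) ≤ 3-2*v-2*w by linarith)]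
  nlinarith [mul_pos (sub_pos.mpr hvw) hB]

/-- sqrt of cubic product form -/
private lemma sqrt_form (x : ℝ) (hx0 : 0 ≤ x) :
    Real.sqrt (x^3*(1-x)) = x * Real.sqrt x * Real.sqrt (1-x) := by
  rw [show x^3*(1-x) = x^2 * (x * (1-x)) by ring, Real.sqrt_mul (sq_nonneg x),
    Real.sqrt_sq hx0, Real.sqrt_mul hx0]
  ring

set_option maxHeartbeats 1000000 in
/-- The explicit formula for `J(t)` on `[2π/3, π)`. -/
theorem stmt3 (t : ℝ) (ht : t ∈ Set.Ico (2 * Real.pi / 3) Real.pi) :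
    Jfun t = 2 * Real.arcsin (Real.sqrt
      (((1 - Real.sin (t / 2) ^ 2) * (1 + (1 + 2 * Real.sin (t / 2) ^ 2) / rAux t) + rAux t)
        / 3)) := by
  obtain ⟨ht1, ht2⟩ := ht
  have hπ : 0 < Real.pi := Real.pi_pos
  have ht2' : t/2 < Real.pi/2 := by linarith
  have ht1' : Real.pi/3 ≤ t/2 := by linarith
  have hsin_nonneg : 0 ≤ Real.sin (t/2) := by
    apply Real.sin_nonneg_of_nonneg_of_le_pi <;> linarith
  have hsin_lb : Real.sqrt 3 / 2 ≤ Real.sin (t/2) := by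
    rw [← Real.sin_pi_div_three]
    exact Real.strictMonoOn_sin.monotoneOn ⟨by linarith, by linarith⟩
      ⟨by linarith, by linarith⟩ ht1'
  have hsin_ub : Real.sin (t/2) < 1 := by
    rw [← Real.sin_pi_div_two]
    exact Real.strictMonoOn_sin ⟨by linarith, by linarith⟩
      ⟨by linarith, le_refl _⟩ ht2'
  have hsqrt3 : (Real.sqrt 3)^2 = 3 := Real.sq_sqrt (by norm_num)
  set c := Real.sin (t/2)^2 with hcdef
  have hc1 : 3/4 ≤ c := by rw [hcdef]; nlinarith [Real.sqrt_nonneg 3]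
  have hc2 : c < 1 := by rw [hcdef]; nlinarith
  have h1c : 0 < 1 - c := by linarith
  set sq := Real.sqrt (27*(3+8*c+16*c^2)) with hsqdef
  have hsqsq : sq^2 = 27*(3+8*c+16*c^2) := Real.sq_sqrt (by positivity)
  have hsq0 : 0 ≤ sq := Real.sqrt_nonneg _
  set E := (1-c)*(2+5*c+20*c^2+c*sq)/2 with hEdef
  have hE0 : 0 < E := by
    have h2 : 0 < 2+5*c+20*c^2+c*sq := by nlinarith [mul_nonneg (by linarith : (0:ℝ) ≤ c) hsq0]
    rw [hEdef]; positivity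
  have hrE : rAux t = E^((1:ℝ)/3) := by
    rw [rAux, show Real.sin (t/2)^4 = (Real.sin (t/2)^2)^2 by ring, ← hcdef, hEdef, hsqdef]
  set r := rAux t with hrdef
  have hr3 : r^3 = E := by
    rw [hrE, ← Real.rpow_natCast (E^((1:ℝ)/3)) 3, ← Real.rpow_mul hE0.le]
    norm_num
  have hr0 : 0 < r := by rw [hrE]; exact Real.rpow_pos_of_pos hE0 _
  set u := ((1-c)*(1+(1+2*c)/r)+r)/3 with hudef
  have hcubic : u^3 = (1-c)*(u^2+c*u+c^2) :=
    cube_aux c u sq r hsqsq (by rw [hr3, hEdef]) hr0 hudef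
  have hg : u^3*(1-u) = c^3*(1-c) := by linear_combination (c-u)*hcubic
  have hu0 : 0 < u := by
    have hq : 0 < 1 + (1+2*c)/r := by
      have : 0 ≤ (1+2*c)/r := div_nonneg (by linarith) hr0.le
      linarith
    have := mul_pos h1c hq
    rw [hudef]; linarith
  have hu34 : u ≤ 3/4 := le_34_aux c u hc1 hcubic
  have hu1 : u < 1 := by linarith
  set S := 2 * Real.arcsin (Real.sqrt u) with hSdef
  -- basic facts about S
  have harc0 : 0 ≤ Real.arcsin (Real.sqrt u) := Real.arcsin_nonneg.mpr (Real.sqrt_nonneg _)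
  have harc2 : Real.arcsin (Real.sqrt u) ≤ Real.pi/2 := Real.arcsin_le_pi_div_two _
  have hsqrt34 : Real.sqrt u ≤ Real.sqrt 3 / 2 := by
    have h34 : Real.sqrt (3/4) = Real.sqrt 3 / 2 := by
      rw [show (3:ℝ)/4 = (Real.sqrt 3/2)^2 by rw [div_pow, hsqrt3]; norm_num,
        Real.sqrt_sq (by positivity)]
    rw [← h34]
    exact Real.sqrt_le_sqrt hu34
  have harc3 : Real.arcsin (Real.sqrt u) ≤ Real.pi/3 := by
    calc Real.arcsin (Real.sqrt u) ≤ Real.arcsin (Real.sqrt 3/2) :=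
          Real.monotone_arcsin hsqrt34
      _ = Real.pi/3 := by
          rw [← Real.sin_pi_div_three]
          exact Real.arcsin_sin (by linarith) (by linarith)
  have hS0 : 0 ≤ S := by rw [hSdef]; linarith
  have hS23 : S ≤ 2*Real.pi/3 := by rw [hSdef]; linarith
  have hS2 : S/2 = Real.arcsin (Real.sqrt u) := by rw [hSdef]; ring
  have hsinS2 : Real.sin (S/2) = Real.sqrt u := by
    rw [hS2]
    exact Real.sin_arcsin (by linarith [Real.sqrt_nonneg u]) (by
      rw [show (1:ℝ) = Real.sqrt 1 by simp]
      exact Real.sqrt_le_sqrt hu1.le)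
  have hcosS2 : Real.cos (S/2) = Real.sqrt (1-u) := by
    have hc0 : 0 ≤ Real.cos (S/2) := by
      apply Real.cos_nonneg_of_mem_Icc
      constructor <;> rw [hS2] <;> linarith
    have hcsq : Real.cos (S/2)^2 = 1-u := by
      have := Real.sin_sq_add_cos_sq (S/2)
      rw [hsinS2, Real.sq_sqrt hu0.le] at this
      linarith
    rw [← hcsq, Real.sqrt_sq hc0]
  -- value of f at a point x with sin(x/2), cos(x/2) ≥ 0 in sqrt form
  have hfS : Real.sin S * Real.sin (S/2)^2 = 2 * Real.sqrt (u^3*(1-u)) := by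
    have hdbl : Real.sin S = 2*Real.sin (S/2)*Real.cos (S/2) := by
      rw [show S = 2*(S/2) by ring, Real.sin_two_mul]
      ring_nf
    rw [hdbl, hsinS2, hcosS2, sqrt_form u hu0.le, Real.sq_sqrt hu0.le]
    ring
  have hft : Real.sin t * Real.sin (t/2)^2 = 2 * Real.sqrt (c^3*(1-c)) := by
    have hdbl : Real.sin t = 2*Real.sin (t/2)*Real.cos (t/2) := by
      rw [show t = 2*(t/2) by ring, Real.sin_two_mul]
      ring_nf
    have hcos0 : 0 ≤ Real.cos (t/2) := by
      apply Real.cos_nonneg_of_mem_Icc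
      constructor <;> linarith
    have hsin_eq : Real.sin (t/2) = Real.sqrt c := by
      rw [hcdef, Real.sqrt_sq hsin_nonneg]
    have hcos_eq : Real.cos (t/2) = Real.sqrt (1-c) := by
      have hcsq : Real.cos (t/2)^2 = 1-c := by
        have := Real.sin_sq_add_cos_sq (t/2)
        rw [← hcdef] at this
        linarith
      rw [← hcsq, Real.sqrt_sq hcos0]
    have hc0 : 0 ≤ c := by rw [hcdef]; positivity
    rw [hdbl, hsin_eq, hcos_eq, sqrt_form c hc0, Real.sq_sqrt hc0]
    ring
  have hfSt : Real.sin S * Real.sin (S/2)^2 = Real.sin t * Real.sin (t/2)^2 := by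
    rw [hfS, hft, hg]
  have hset : {s : ℝ | s ∈ Set.Icc 0 (2 * Real.pi / 3) ∧
      Real.sin s * Real.sin (s / 2) ^ 2 = Real.sin t * Real.sin (t / 2) ^ 2} = {S} := by
    apply Set.eq_singleton_iff_unique_mem.mpr
    refine ⟨⟨⟨hS0, hS23⟩, hfSt⟩, ?_⟩
    rintro s ⟨⟨hs0, hs23⟩, hfs⟩
    have hs2a : (0:ℝ) ≤ s/2 := by linarith
    have hs2b : s/2 ≤ Real.pi/3 := by linarith
    have hsins : 0 ≤ Real.sin (s/2) := by
      apply Real.sin_nonneg_of_nonneg_of_le_pi <;> linarith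
    set v := Real.sin (s/2)^2 with hvdef
    have hv0 : 0 ≤ v := by rw [hvdef]; positivity
    have hv34 : v ≤ 3/4 := by
      have hle : Real.sin (s/2) ≤ Real.sqrt 3/2 := by
        rw [← Real.sin_pi_div_three]
        exact Real.strictMonoOn_sin.monotoneOn ⟨by linarith, by linarith⟩
          ⟨by linarith, by linarith⟩ hs2b
      have hp : Real.sin (s/2)^2 ≤ (Real.sqrt 3/2)^2 := by
        apply pow_le_pow_left₀ hsins hle
      rw [div_pow, hsqrt3] at hp
      rw [hvdef]; linarith
    have hcoss : 0 ≤ Real.cos (s/2) := by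
      apply Real.cos_nonneg_of_mem_Icc
      constructor <;> linarith
    have hfs' : Real.sin s * Real.sin (s/2)^2 = 2 * Real.sqrt (v^3*(1-v)) := by
      have hdbl : Real.sin s = 2*Real.sin (s/2)*Real.cos (s/2) := by
        rw [show s = 2*(s/2) by ring, Real.sin_two_mul]
        ring_nf
      have hsin_eq : Real.sin (s/2) = Real.sqrt v := by
        rw [hvdef, Real.sqrt_sq hsins]
      have hcos_eq : Real.cos (s/2) = Real.sqrt (1-v) := by
        have hcsq : Real.cos (s/2)^2 = 1-v := by
          have := Real.sin_sq_add_cos_sq (s/2)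
          rw [← hvdef] at this
          linarith
        rw [← hcsq, Real.sqrt_sq hcoss]
      rw [hdbl, hsin_eq, hcos_eq, sqrt_form v hv0, Real.sq_sqrt hv0]
      ring
    have hvu : v^3*(1-v) = u^3*(1-u) := by
      have he : Real.sqrt (v^3*(1-v)) = Real.sqrt (u^3*(1-u)) := by
        have h1 : (2:ℝ) * Real.sqrt (v^3*(1-v)) = 2 * Real.sqrt (u^3*(1-u)) := by
          rw [← hfs', ← hfS, hfs, hfSt]
        linarith
      have hv' : 0 ≤ v^3*(1-v) := mul_nonneg (pow_nonneg hv0 3) (by linarith)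
      have hu' : 0 ≤ u^3*(1-u) := mul_nonneg (pow_nonneg hu0.le 3) (by linarith)
      calc v^3*(1-v) = Real.sqrt (v^3*(1-v)) ^ 2 := (Real.sq_sqrt hv').symm
        _ = Real.sqrt (u^3*(1-u)) ^ 2 := by rw [he]
        _ = u^3*(1-u) := Real.sq_sqrt hu'
    have hveq : v = u := by
      rcases lt_trichotomy v u with h | h | h
      · exact absurd hvu (ne_of_lt (mono_aux v u hv0 hu34 h))
      · exact h
      · exact absurd hvu.symm (ne_of_lt (mono_aux u v hu0.le hv34 h))
    have hsin_eq2 : Real.sin (s/2) = Real.sin (S/2) := by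
      rw [hsinS2, show Real.sin (s/2) = Real.sqrt v by rw [hvdef, Real.sqrt_sq hsins], hveq]
    have h2 : s/2 = S/2 := by
      apply Real.injOn_sin _ _ hsin_eq2
      · constructor <;> linarith
      · constructor <;> rw [hS2] <;> linarith
    linarith
  unfold Jfun
  rw [hset, csInf_singleton]
end
end

section
/- There exist constants C > 0 and δ ∈ (0, π/3) such that for all t ∈ (π − δ, π): |J(t) − 4^{1/3}·(π − t)^{1/3} − (π − t)/3| ≤ C·(π − t)^{5/3}. -/
noncomputable section

open Real

lemma nonneg_of_hasDerivAt (F F' : ℝ → ℝ) (hF : ∀ x, HasDerivAt F (F' x) x)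
    (h0 : F 0 = 0) (hd : ∀ x, 0 ≤ x → 0 ≤ F' x) : ∀ x, 0 ≤ x → 0 ≤ F x := by
  intro x hx
  have hdiff : Differentiable ℝ F := fun y => (hF y).differentiableAt
  have mono : MonotoneOn F (Set.Ici 0) := by
    apply monotoneOn_of_deriv_nonneg (convex_Ici 0) hdiff.continuous.continuousOn
      (fun y _ => (hdiff y).differentiableWithinAt)
    intro y hy
    rw [interior_Ici] at hy
    rw [(hF y).deriv]
    exact hd y hy.le
  calc (0:ℝ) = F 0 := h0.symm
    _ ≤ F x := mono Set.self_mem_Ici hx hx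

lemma sin_ge_t3 : ∀ x : ℝ, 0 ≤ x → x - x^3/6 ≤ Real.sin x := by
  have h := nonneg_of_hasDerivAt (fun x => Real.sin x - (x - x^3/6))
    (fun x => Real.cos x - (1 - x^2/2)) ?_ (by norm_num) ?_
  · intro x hx; linarith [h x hx]
  · intro x
    have h1 : HasDerivAt (fun x : ℝ => x ^ 3) (3 * x ^ 2) x := by
      simpa using hasDerivAt_pow 3 x
    have := (Real.hasDerivAt_sin x).sub ((hasDerivAt_id x).sub (h1.div_const 6))
    exact this.congr_deriv (by ring)
  · intro x _; linarith [Real.one_sub_sq_div_two_le_cos (x := x)]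

lemma cos_le_t4 : ∀ x : ℝ, 0 ≤ x → Real.cos x ≤ 1 - x^2/2 + x^4/24 := by
  have h := nonneg_of_hasDerivAt (fun x => 1 - x^2/2 + x^4/24 - Real.cos x)
    (fun x => Real.sin x - (x - x^3/6)) ?_ (by norm_num) ?_
  · intro x hx; linarith [h x hx]
  · intro x
    have h2 : HasDerivAt (fun x : ℝ => x ^ 2) (2 * x) x := by simpa using hasDerivAt_pow 2 x
    have h4 : HasDerivAt (fun x : ℝ => x ^ 4) (4 * x ^ 3) x := by simpa using hasDerivAt_pow 4 x
    have := (((hasDerivAt_const x (1:ℝ)).sub (h2.div_const 2)).add (h4.div_const 24)).sub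
      (Real.hasDerivAt_cos x)
    exact this.congr_deriv (by ring)
  · intro x hx; linarith [sin_ge_t3 x hx]

lemma sin_le_t5 : ∀ x : ℝ, 0 ≤ x → Real.sin x ≤ x - x^3/6 + x^5/120 := by
  have h := nonneg_of_hasDerivAt (fun x => x - x^3/6 + x^5/120 - Real.sin x)
    (fun x => 1 - x^2/2 + x^4/24 - Real.cos x) ?_ (by norm_num) ?_
  · intro x hx; linarith [h x hx]
  · intro x
    have h3 : HasDerivAt (fun x : ℝ => x ^ 3) (3 * x ^ 2) x := by simpa using hasDerivAt_pow 3 x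
    have h5 : HasDerivAt (fun x : ℝ => x ^ 5) (5 * x ^ 4) x := by simpa using hasDerivAt_pow 5 x
    have := (((hasDerivAt_id x).sub (h3.div_const 6)).add (h5.div_const 120)).sub
      (Real.hasDerivAt_sin x)
    exact this.congr_deriv (by ring)
  · intro x hx; linarith [cos_le_t4 x hx]

lemma cos_ge_t6 : ∀ x : ℝ, 0 ≤ x → 1 - x^2/2 + x^4/24 - x^6/720 ≤ Real.cos x := by
  have h := nonneg_of_hasDerivAt (fun x => Real.cos x - (1 - x^2/2 + x^4/24 - x^6/720))
    (fun x => (x - x^3/6 + x^5/120) - Real.sin x) ?_ (by norm_num) ?_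
  · intro x hx; linarith [h x hx]
  · intro x
    have h2 : HasDerivAt (fun x : ℝ => x ^ 2) (2 * x) x := by simpa using hasDerivAt_pow 2 x
    have h4 : HasDerivAt (fun x : ℝ => x ^ 4) (4 * x ^ 3) x := by simpa using hasDerivAt_pow 4 x
    have h6 : HasDerivAt (fun x : ℝ => x ^ 6) (6 * x ^ 5) x := by simpa using hasDerivAt_pow 6 x
    have := (Real.hasDerivAt_cos x).sub
      ((((hasDerivAt_const x (1:ℝ)).sub (h2.div_const 2)).add (h4.div_const 24)).sub
        (h6.div_const 720))
    exact this.congr_deriv (by ring)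
  · intro x hx; linarith [sin_le_t5 x hx]

lemma sin_ge_t7 : ∀ x : ℝ, 0 ≤ x → x - x^3/6 + x^5/120 - x^7/5040 ≤ Real.sin x := by
  have h := nonneg_of_hasDerivAt (fun x => Real.sin x - (x - x^3/6 + x^5/120 - x^7/5040))
    (fun x => Real.cos x - (1 - x^2/2 + x^4/24 - x^6/720)) ?_ (by norm_num) ?_
  · intro x hx; linarith [h x hx]
  · intro x
    have h3 : HasDerivAt (fun x : ℝ => x ^ 3) (3 * x ^ 2) x := by simpa using hasDerivAt_pow 3 x
    have h5 : HasDerivAt (fun x : ℝ => x ^ 5) (5 * x ^ 4) x := by simpa using hasDerivAt_pow 5 x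
    have h7 : HasDerivAt (fun x : ℝ => x ^ 7) (7 * x ^ 6) x := by simpa using hasDerivAt_pow 7 x
    have := (Real.hasDerivAt_sin x).sub
      ((((hasDerivAt_id x).sub (h3.div_const 6)).add (h5.div_const 120)).sub
        (h7.div_const 5040))
    exact this.congr_deriv (by ring)
  · intro x hx; linarith [cos_ge_t6 x hx]


lemma f_hasDerivAt (s : ℝ) : HasDerivAt (fun s : ℝ => Real.sin s * Real.sin (s / 2) ^ 2)
    (Real.cos s * Real.sin (s / 2) ^ 2 +
      Real.sin s * (2 * Real.sin (s / 2) ^ 1 * (Real.cos (s / 2) * (1 / 2)))) s := by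
  have hhalf : HasDerivAt (fun s : ℝ => s / 2) (1 / 2) s := by
    simpa using (hasDerivAt_id s).div_const 2
  have hsinhalf : HasDerivAt (fun s : ℝ => Real.sin (s / 2)) (Real.cos (s / 2) * (1 / 2)) s :=
    hhalf.sin
  exact (Real.hasDerivAt_sin s).mul (hsinhalf.pow 2)

lemma f_strictMono :
    StrictMonoOn (fun s : ℝ => Real.sin s * Real.sin (s / 2) ^ 2)
      (Set.Icc 0 (2 * Real.pi / 3)) := by
  apply strictMonoOn_of_deriv_pos (convex_Icc _ _)
  · exact (Real.continuous_sin.mul ((Real.continuous_sin.comp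
      (continuous_id.div_const 2)).pow 2)).continuousOn
  · intro s hs
    rw [interior_Icc] at hs
    rw [(f_hasDerivAt s).deriv]
    have hpi := Real.pi_pos
    have h1 : 0 < Real.sin (s / 2) :=
      Real.sin_pos_of_pos_of_lt_pi (by linarith [hs.1]) (by linarith [hs.2])
    have h2 : 0 < Real.sin (s + s / 2) :=
      Real.sin_pos_of_pos_of_lt_pi (by linarith [hs.1]) (by linarith [hs.2])
    have hadd := Real.sin_add s (s / 2)
    nlinarith [mul_pos h1 h2]

lemma polyU (w : ℝ) (hw : 0 < w) (hwh : w ≤ 1/2) :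
    w^3/4 ≤ (w + w^3/12 + w^5)^3/4 - (w + w^3/12 + w^5)^5/16 - (w + w^3/12 + w^5)^7/10080 := by
  have hw2 : w^2 ≤ 1/4 := by nlinarith
  have key : ∀ k : ℕ, w^(k+2) ≤ w^k/4 := by
    intro k
    have h := mul_nonneg (pow_nonneg hw.le k) (by linarith : (0:ℝ) ≤ 1/4 - w^2)
    have h' : w^k * (1/4 - w^2) = w^k/4 - w^k * w^2 := by ring
    have hpow : w^(k+2) = w^k * w^2 := by rw [pow_add]
    linarith
  have h9 := key 7; have h11 := key 9; have h13 := key 11; have h15 := key 13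
  have h17 := key 15; have h19 := key 17; have h21 := key 19; have h23 := key 21
  have h25 := key 23; have h27 := key 25; have h29 := key 27; have h31 := key 29
  have h33 := key 31; have h35 := key 33
  norm_num at h9 h11 h13 h15 h17 h19 h21 h23 h25 h27 h29 h31 h33 h35
  have hU : (0:ℝ) ≤ (7349/10080) * w ^ 7 + (-2209/11520) * w ^ 9 + (22463/34560) * w ^ 11 + (-2865973/4976640) * w ^ 13 + (5426759/59719680) * w ^ 15 + (-76311241/119439360) * w ^ 17 + (-465006961/4299816960) * w ^ 19 + (-114860235169/361184624640) * w ^ 21 + (-127528561/4299816960) * w ^ 23 + (-7569601/119439360) * w ^ 25 + (-64373/29859840) * w ^ 27 + (-869/2488320) * w ^ 29 + (-49/69120) * w ^ 31 + (-1/17280) * w ^ 33 + (-1/10080) * w ^ 35 := by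
    linarith [pow_nonneg hw.le 7, pow_nonneg hw.le 11, pow_nonneg hw.le 15]
  linarith [hU]

lemma polyL (w : ℝ) (hw : 0 < w) (hwh : w ≤ 1/2) :
    (w + w^3/12 - w^5)^3/4 - (w + w^3/12 - w^5)^5/16 + (2/315)*(w + w^3/12 - w^5)^7
      ≤ w^3/4 - (5/768)*w^9 := by
  have hw2 : w^2 ≤ 1/4 := by nlinarith
  have key : ∀ k : ℕ, w^(k+2) ≤ w^k/4 := by
    intro k
    have h := mul_nonneg (pow_nonneg hw.le k) (by linarith : (0:ℝ) ≤ 1/4 - w^2)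
    have h' : w^k * (1/4 - w^2) = w^k/4 - w^k * w^2 := by ring
    have hpow : w^(k+2) = w^k * w^2 := by rw [pow_add]
    linarith
  have h9 := key 7; have h11 := key 9; have h13 := key 11; have h15 := key 13
  have h17 := key 15; have h19 := key 17; have h21 := key 19; have h23 := key 21
  have h25 := key 23; have h27 := key 25; have h29 := key 27; have h31 := key 29
  have h33 := key 31; have h35 := key 33
  norm_num at h9 h11 h13 h15 h17 h19 h21 h23 h25 h27 h29 h31 h33 h35
  have hL : (0:ℝ) ≤ (3853/5040) * w ^ 7 + (-209/1080) * w ^ 9 + (-2061/2560) * w ^ 11 + (2844587/4976640) * w ^ 13 + (16531151/59719680) * w ^ 15 + (-9958793/14929920) * w ^ 17 + (7335899/67184640) * w ^ 19 + (2152791647/5643509760) * w ^ 21 + (-12560399/67184640) * w ^ 23 + (-219361/1866240) * w ^ 25 + (60053/466560) * w ^ 27 + (859/38880) * w ^ 29 + (-47/1080) * w ^ 31 + (-1/270) * w ^ 33 + (2/315) * w ^ 35 := by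
    linarith [pow_nonneg hw.le 7, pow_nonneg hw.le 13, pow_nonneg hw.le 15,
      pow_nonneg hw.le 19, pow_nonneg hw.le 21, pow_nonneg hw.le 27, pow_nonneg hw.le 29,
      pow_nonneg hw.le 35]
  linarith [hL]

lemma f_id (s : ℝ) :
    Real.sin s * Real.sin (s / 2) ^ 2 = (2 * Real.sin s - Real.sin (2 * s)) / 4 := by
  have h2 : (2:ℝ) * (s / 2) = s := by ring
  rw [Real.sin_sq, Real.cos_sq, h2, Real.sin_two_mul]
  ring


set_option maxHeartbeats 1000000 in
/-- `J(t) = 4^{1/3}(π−t)^{1/3} + (π−t)/3 + O((π−t)^{5/3})` as `t → π⁻`. -/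
theorem stmt4 :
    ∃ C > (0 : ℝ), ∃ δ ∈ Set.Ioo (0 : ℝ) (Real.pi / 3),
      ∀ t ∈ Set.Ioo (Real.pi - δ) Real.pi,
        |Jfun t - (4 : ℝ) ^ ((1 : ℝ) / 3) * (Real.pi - t) ^ ((1 : ℝ) / 3) - (Real.pi - t) / 3|
          ≤ C * (Real.pi - t) ^ ((5 : ℝ) / 3) := by
  have hpi := Real.pi_gt_three
  refine ⟨(4:ℝ) ^ ((5:ℝ)/3), Real.rpow_pos_of_pos (by norm_num) _, 1/100,
    ⟨by norm_num, by linarith⟩, ?_⟩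
  rintro t ⟨ht1, ht2⟩
  set ε := Real.pi - t with hεdef
  have hε0 : 0 < ε := by rw [hεdef]; linarith
  have hεδ : ε < 1/100 := by rw [hεdef]; linarith
  set w : ℝ := (4:ℝ) ^ ((1:ℝ)/3) * ε ^ ((1:ℝ)/3) with hwdef
  have h43 : ((4:ℝ) ^ ((1:ℝ)/3)) ^ (3:ℕ) = 4 := by
    rw [← Real.rpow_natCast ((4:ℝ) ^ ((1:ℝ)/3)) 3, ← Real.rpow_mul (by norm_num : (0:ℝ) ≤ 4)]
    norm_num
  have hε3 : (ε ^ ((1:ℝ)/3)) ^ (3:ℕ) = ε := by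
    rw [← Real.rpow_natCast (ε ^ ((1:ℝ)/3)) 3, ← Real.rpow_mul hε0.le]
    norm_num
  have hw3 : w ^ 3 = 4 * ε := by rw [hwdef, mul_pow, h43, hε3]
  have hw0 : 0 < w :=
    mul_pos (Real.rpow_pos_of_pos (by norm_num) _) (Real.rpow_pos_of_pos hε0 _)
  have hwh : w ≤ 1/2 := by
    have h : w ^ 3 ≤ (1/2:ℝ) ^ 3 := by rw [hw3]; linarith
    exact le_of_pow_le_pow_left₀ (by norm_num) (by norm_num) h
  have hw5 : w ^ 5 = (4:ℝ) ^ ((5:ℝ)/3) * ε ^ ((5:ℝ)/3) := by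
    rw [hwdef, mul_pow, ← Real.rpow_natCast ((4:ℝ) ^ ((1:ℝ)/3)) 5,
      ← Real.rpow_natCast (ε ^ ((1:ℝ)/3)) 5,
      ← Real.rpow_mul (by norm_num : (0:ℝ) ≤ 4), ← Real.rpow_mul hε0.le]
    norm_num
  have hεw : ε = w ^ 3 / 4 := by linarith
  -- the value at t
  have hft : Real.sin t * Real.sin (t / 2) ^ 2 = (2 * Real.sin ε + Real.sin (2 * ε)) / 4 := by
    have ht : t = Real.pi - ε := by rw [hεdef]; ring
    have h2 : (2:ℝ) * (ε / 2) = ε := by ring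
    rw [ht, Real.sin_pi_sub, show (Real.pi - ε) / 2 = Real.pi / 2 - ε / 2 by ring,
      Real.sin_pi_div_two_sub, Real.cos_sq, h2, Real.sin_two_mul]
    ring
  set s1 : ℝ := w + w^3/12 - w^5 with hs1
  set s2 : ℝ := w + w^3/12 + w^5 with hs2
  have hwp3 : w^3 ≤ (1/2:ℝ)^3 := pow_le_pow_left₀ hw0.le hwh 3
  have hwp4 : w^4 ≤ (1/2:ℝ)^4 := pow_le_pow_left₀ hw0.le hwh 4
  have hwp5 : w^5 ≤ (1/2:ℝ)^5 := pow_le_pow_left₀ hw0.le hwh 5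
  have hw5nn : 0 ≤ w^5 := pow_nonneg hw0.le 5
  have hw3nn : 0 ≤ w^3 := pow_nonneg hw0.le 3
  have hs1nn : 0 ≤ s1 := by
    have h4 : (0:ℝ) ≤ 1/16 - w^4 := by norm_num at hwp4; linarith
    have h5 := mul_nonneg hw0.le h4
    have h5' : w * (1/16 - w^4) = w/16 - w^5 := by ring
    rw [hs1]; linarith
  have hs12 : s1 ≤ s2 := by rw [hs1, hs2]; linarith
  have hs2le : s2 ≤ 2 * Real.pi / 3 := by rw [hs2]; norm_num at hwp3 hwp5; linarith
  -- bounds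
  have hfs2 : ε ≤ Real.sin s2 * Real.sin (s2 / 2) ^ 2 := by
    rw [f_id]
    have h1 := sin_ge_t7 s2 (by linarith)
    have h2 := sin_le_t5 (2*s2) (by linarith)
    have hpoly := polyU w hw0 hwh
    rw [← hs2] at hpoly
    rw [hεw]
    linarith
  have hgu : Real.sin t * Real.sin (t / 2) ^ 2 ≤ ε := by
    rw [hft]
    have h1 := Real.sin_le hε0.le
    have h2 := Real.sin_le (by linarith : (0:ℝ) ≤ 2*ε)
    linarith
  have hgl : Real.sin s1 * Real.sin (s1 / 2) ^ 2 ≤ Real.sin t * Real.sin (t / 2) ^ 2 := by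
    rw [hft, f_id]
    have h1 := sin_le_t5 s1 hs1nn
    have h2 := sin_ge_t7 (2*s1) (by linarith)
    have h3 := sin_ge_t3 ε hε0.le
    have h4 := sin_ge_t3 (2*ε) (by linarith)
    have hpoly := polyL w hw0 hwh
    rw [← hs1] at hpoly
    have hε9 : ε^3 = w^9/64 := by rw [hεw]; ring
    linarith
  have hfs2' : Real.sin t * Real.sin (t / 2) ^ 2 ≤ Real.sin s2 * Real.sin (s2 / 2) ^ 2 :=
    le_trans hgu hfs2
  -- IVT
  have hcont : ContinuousOn (fun s : ℝ => Real.sin s * Real.sin (s / 2) ^ 2)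
      (Set.Icc s1 s2) :=
    (Real.continuous_sin.mul ((Real.continuous_sin.comp
      (continuous_id.div_const 2)).pow 2)).continuousOn
  have hivt := intermediate_value_Icc hs12 hcont
  have hmem : Real.sin t * Real.sin (t / 2) ^ 2 ∈
      Set.Icc (Real.sin s1 * Real.sin (s1 / 2) ^ 2) (Real.sin s2 * Real.sin (s2 / 2) ^ 2) :=
    ⟨hgl, hfs2'⟩
  obtain ⟨s0, hs0mem, hfs0⟩ := hivt hmem
  simp only at hfs0
  have hs0Icc : s0 ∈ Set.Icc (0:ℝ) (2 * Real.pi / 3) :=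
    ⟨le_trans hs1nn hs0mem.1, le_trans hs0mem.2 hs2le⟩
  have hJ : Jfun t = s0 := by
    have hset : {s : ℝ | s ∈ Set.Icc 0 (2 * Real.pi / 3) ∧
        Real.sin s * Real.sin (s / 2) ^ 2 = Real.sin t * Real.sin (t / 2) ^ 2} = {s0} := by
      ext s
      simp only [Set.mem_setOf_eq, Set.mem_singleton_iff]
      constructor
      · rintro ⟨hmem', heq⟩
        exact f_strictMono.injOn hmem' hs0Icc
          (show Real.sin s * Real.sin (s / 2) ^ 2 = Real.sin s0 * Real.sin (s0 / 2) ^ 2 by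
            rw [heq, hfs0])
      · rintro rfl
        exact ⟨hs0Icc, hfs0⟩
    unfold Jfun
    rw [hset, csInf_singleton]
  rw [hJ]
  have hε3' : ε/3 = w^3/12 := by rw [hεw]; ring
  rw [abs_le]
  constructor
  · have := hs0mem.1
    rw [hs1] at this
    linarith
  · have := hs0mem.2
    rw [hs2] at this
    linarith
end
end

section
/- For every integer n ≥ 1 and every function θ̃ : {0,…,n} → ℝ satisfying the adjustment conditions (i)–(v), one has min_{0 ≤ j < k ≤ n} |θ̃_j − θ̃_k| ≥ 2π/(3(n+1)). -/
noncomputable section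

open Real

def gfn (x : ℝ) : ℝ := Real.sin x * Real.sin (x / 2) ^ 2

lemma gfn_eq (x : ℝ) : gfn x = Real.sin x * (1 - Real.cos x) / 2 := by
  have h := Real.sin_sq_eq_half_sub (x / 2)
  rw [gfn, h, show 2 * (x/2) = x by ring]; ring

lemma cos_2pi3 : Real.cos (2 * Real.pi / 3) = -(1/2) := by
  rw [show 2 * Real.pi / 3 = Real.pi - Real.pi / 3 by ring, Real.cos_pi_sub,
    Real.cos_pi_div_three]

lemma gfn_hasDerivAt (x : ℝ) :
    HasDerivAt gfn ((1/2) * (1 + 2 * Real.cos x) * (1 - Real.cos x)) x := by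
  have h : HasDerivAt (fun x => Real.sin x * (1 - Real.cos x) / 2)
      ((Real.cos x * (1 - Real.cos x) + Real.sin x * Real.sin x) / 2) x :=
    ((Real.hasDerivAt_sin x).mul ((hasDerivAt_const x 1).sub (Real.hasDerivAt_cos x))).div_const 2 |>.congr_deriv (by simp only [Pi.sub_apply]; ring)
  have h2 : HasDerivAt (fun x => Real.sin x * (1 - Real.cos x) / 2)
      ((1/2) * (1 + 2 * Real.cos x) * (1 - Real.cos x)) x :=
    h.congr_deriv (by nlinarith [Real.sin_sq_add_cos_sq x])
  exact h2.congr_of_eventuallyEq (Filter.Eventually.of_forall fun y => (gfn_eq y))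

lemma gfn_cont : Continuous gfn := by unfold gfn; continuity

lemma gfn_mono : StrictMonoOn gfn (Set.Icc 0 (2 * Real.pi / 3)) := by
  apply strictMonoOn_of_deriv_pos (convex_Icc _ _) gfn_cont.continuousOn
  intro x hx
  rw [interior_Icc] at hx
  obtain ⟨hx1, hx2⟩ := hx
  rw [(gfn_hasDerivAt x).deriv]
  have hpi := Real.pi_pos
  have h1 : Real.cos x < 1 := by
    have := Real.strictAntiOn_cos (Set.left_mem_Icc.2 (by linarith)) ⟨le_of_lt hx1, by linarith⟩ hx1
    rw [Real.cos_zero] at this; linarith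
  have h2 : -(1/2 : ℝ) < Real.cos x := by
    have := Real.strictAntiOn_cos ⟨le_of_lt hx1, by linarith⟩ ⟨by linarith, by linarith⟩ hx2
    rw [cos_2pi3] at this; linarith
  nlinarith

lemma gfn_anti : StrictAntiOn gfn (Set.Icc (2 * Real.pi / 3) Real.pi) := by
  apply strictAntiOn_of_deriv_neg (convex_Icc _ _) gfn_cont.continuousOn
  intro x hx
  rw [interior_Icc] at hx
  obtain ⟨hx1, hx2⟩ := hx
  rw [(gfn_hasDerivAt x).deriv]
  have hpi := Real.pi_pos
  have h1 : -1 < Real.cos x := by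
    have := Real.strictAntiOn_cos ⟨by linarith, le_of_lt hx2⟩ (Set.right_mem_Icc.2 (by linarith)) hx2
    rw [Real.cos_pi] at this; linarith
  have h2 : Real.cos x < -(1/2 : ℝ) := by
    have := Real.strictAntiOn_cos ⟨by linarith, by linarith⟩ ⟨by linarith, by linarith⟩ hx1
    rw [cos_2pi3] at this; linarith
  nlinarith

lemma gfn_nonneg {x : ℝ} (h0 : 0 ≤ x) (h1 : x ≤ Real.pi) : 0 ≤ gfn x :=
  mul_nonneg (Real.sin_nonneg_of_nonneg_of_le_pi h0 h1) (sq_nonneg _)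

lemma gfn_reflect {u : ℝ} (h0 : 0 ≤ u) (h1 : u ≤ Real.pi / 2) : gfn u ≤ gfn (Real.pi - u) := by
  rw [gfn_eq, gfn_eq, Real.sin_pi_sub, Real.cos_pi_sub]
  have hs : 0 ≤ Real.sin u := Real.sin_nonneg_of_nonneg_of_le_pi h0 (by linarith [Real.pi_pos])
  have hc : 0 ≤ Real.cos u := Real.cos_nonneg_of_mem_Icc ⟨by linarith, h1⟩
  nlinarith

lemma gfn_two_thirds_max {t : ℝ} (ht : t ∈ Set.Icc (2 * Real.pi / 3) Real.pi) :
    gfn t ≤ gfn (2 * Real.pi / 3) := by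
  rcases eq_or_lt_of_le ht.1 with h | h
  · rw [h]
  · exact le_of_lt (gfn_anti (Set.left_mem_Icc.2 (by linarith [ht.2])) ht h)

lemma Jfun_spec {t : ℝ} (ht : t ∈ Set.Icc (2 * Real.pi / 3) Real.pi) :
    (Jfun t ∈ Set.Icc 0 (2 * Real.pi / 3) ∧ gfn (Jfun t) = gfn t) ∧
    ∀ s ∈ Set.Icc 0 (2 * Real.pi / 3), gfn s = gfn t → s = Jfun t := by
  have hpi := Real.pi_pos
  have h23 : (0:ℝ) ≤ 2 * Real.pi / 3 := by linarith
  have hek : gfn t ∈ Set.Icc (gfn 0) (gfn (2 * Real.pi / 3)) := by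
    constructor
    · have : gfn 0 = 0 := by simp [gfn]
      rw [this]
      exact gfn_nonneg (by linarith [ht.1]) ht.2
    · exact gfn_two_thirds_max ht
  obtain ⟨s₀, hs₀, hgs₀⟩ := intermediate_value_Icc h23 gfn_cont.continuousOn hek
  have huniq : ∀ s ∈ Set.Icc 0 (2 * Real.pi / 3), gfn s = gfn t → s = s₀ := fun s hs hgs =>
    gfn_mono.injOn hs hs₀ (hgs.trans hgs₀.symm)
  have hset : {s : ℝ | s ∈ Set.Icc 0 (2 * Real.pi / 3) ∧ gfn s = gfn t} = {s₀} := by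
    ext s
    simp only [Set.mem_setOf_eq, Set.mem_singleton_iff]
    constructor
    · rintro ⟨h1, h2⟩; exact huniq s h1 h2
    · rintro rfl; exact ⟨hs₀, hgs₀⟩
  have hJ : Jfun t = s₀ := by
    have h0 : Jfun t = sInf {s : ℝ | s ∈ Set.Icc 0 (2 * Real.pi / 3) ∧ gfn s = gfn t} := rfl
    rw [h0, hset, csInf_singleton]
  rw [hJ]
  exact ⟨⟨hs₀, hgs₀⟩, huniq⟩

lemma Jfun_lb {t w : ℝ} (ht : t ∈ Set.Icc (2 * Real.pi / 3) Real.pi)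
    (hw : 0 ≤ w) (hw3 : w ≤ Real.pi / 3) (hwt : t ≤ Real.pi - w) : w ≤ Jfun t := by
  have hpi := Real.pi_pos
  have hJ := (Jfun_spec ht).1
  have h1 : gfn w ≤ gfn (Real.pi - w) := gfn_reflect hw (by linarith)
  have h2 : gfn (Real.pi - w) ≤ gfn t := by
    rcases eq_or_lt_of_le hwt with h | h
    · rw [h]
    · exact le_of_lt (gfn_anti ht ⟨by linarith, by linarith⟩ h)
  have h3 : gfn w ≤ gfn (Jfun t) := by rw [hJ.2]; linarith
  exact (gfn_mono.le_iff_le ⟨hw, by linarith⟩ hJ.1).1 h3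

lemma crux_poly (x y : ℝ) (h1 : 0 < x) (h3 : 0 ≤ y) (h4 : y ≤ 3)
    (hc : (x^2-y^2)*(18+x^2+y^2) + 8*(x^3+y^3) = 0) :
    3*y - y^2 < 3*x + x^2 := by
  nlinarith [sq_nonneg (x-y), sq_nonneg (x+y), mul_pos h1 h1, sq_nonneg (x*y),
    mul_nonneg h3 h3, sq_nonneg (x+y-2), sq_nonneg (x*y-1)]

lemma crux_cd (c d : ℝ) (h1 : -1 < c) (h2 : c < -(1/2)) (h3 : -(1/2) ≤ d) (h4 : d ≤ 1)
    (hc : (1-c)^3*(1+c) = (1-d)^3*(1+d)) :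
    (1+2*c)*(1-c) + (1+2*d)*(1-d) < 0 := by
  have key := crux_poly (-(2*c+1)) (2*d+1) (by linarith) (by linarith) (by linarith)
    (by linear_combination -16 * hc)
  nlinarith [key]

set_option maxHeartbeats 1000000 in
lemma Jfun_lip {a b : ℝ} (ha : 2 * Real.pi / 3 < a) (hab : a ≤ b) (hb : b ≤ Real.pi) :
    Jfun b + (b - a) ≤ Jfun a := by
  have hpi := Real.pi_pos
  rcases eq_or_lt_of_le hab with rfl | hab'
  · simp
  set C := Jfun a + a with hC
  have haI : a ∈ Set.Icc (2 * Real.pi / 3) Real.pi := ⟨le_of_lt ha, by linarith⟩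
  have hJa := (Jfun_spec haI).1
  have hCpi : Real.pi ≤ C := by
    have := Jfun_lb haI (by linarith : (0:ℝ) ≤ Real.pi - a) (by linarith) (by linarith)
    simp only [hC]; linarith
  set D : ℝ → ℝ := fun t => gfn (C - t) - gfn t with hD
  have hDcont : Continuous D := ((gfn_cont.comp (continuous_const.sub continuous_id)).sub gfn_cont)
  have hDa : D a = 0 := by
    show gfn (Jfun a + a - a) - gfn a = 0
    rw [add_sub_cancel_right, hJa.2, sub_self]
  have key : ∀ τ ∈ Set.Icc a b, 0 ≤ D τ := by
    by_contra hcon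
    push_neg at hcon
    obtain ⟨τ, hτI, hτneg⟩ := hcon
    set S := {t ∈ Set.Icc a τ | 0 ≤ D t} with hS
    have hSne : S.Nonempty := ⟨a, Set.left_mem_Icc.2 hτI.1, by rw [hDa]⟩
    have hScl : IsCompact S := by
      have : S = Set.Icc a τ ∩ {t | 0 ≤ D t} := rfl
      rw [this]
      exact isCompact_Icc.inter_right (isClosed_le continuous_const hDcont)
    have hσmem : sSup S ∈ S := hScl.sSup_mem hSne
    set σ := sSup S with hσ
    obtain ⟨hσI, hσD⟩ := hσmem
    have hστ : σ < τ := lt_of_le_of_ne hσI.2 (fun hh => by rw [hh] at hσD; linarith)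
    have hneg : ∀ t ∈ Set.Ioc σ τ, D t < 0 := by
      intro t htI
      by_contra hge
      push_neg at hge
      have htS : t ∈ S := ⟨⟨le_trans hσI.1 (le_of_lt htI.1), htI.2⟩, hge⟩
      have := le_csSup hScl.bddAbove htS
      have := htI.1
      linarith
    have hσ0 : D σ = 0 := by
      rcases eq_or_lt_of_le hσD with hh | hpos
      · exact hh.symm
      · exfalso
        have hev : ∀ᶠ t in nhds σ, 0 < D t :=
          (hDcont.continuousAt).eventually_mem (eventually_gt_nhds hpos)
        have hev' : ∀ᶠ t in nhdsWithin σ (Set.Ioi σ), 0 < D t :=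
          hev.filter_mono nhdsWithin_le_nhds
        have hIoc : Set.Ioc σ τ ∈ nhdsWithin σ (Set.Ioi σ) := Ioc_mem_nhdsGT hστ
        obtain ⟨t, h0t, htIoc⟩ := (hev'.and hIoc).exists
        exact absurd (hneg t htIoc) (not_lt.2 (le_of_lt h0t))
    -- derivative argument at σ
    have hσa : a ≤ σ := hσI.1
    have hσltpi : σ < Real.pi := lt_of_lt_of_le hστ (le_trans hτI.2 hb)
    set s' := C - σ with hs'def
    have hgs' : gfn s' = gfn σ := by
      have : gfn (C - σ) - gfn σ = 0 := hσ0
      simp only [hs'def]; linarith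
    have hs'0 : 0 ≤ s' := by simp only [hs'def]; linarith
    have hs'23 : s' ≤ 2 * Real.pi / 3 := by
      have := hJa.1.2
      simp only [hs'def, hC]; linarith
    have hc1 : -1 < Real.cos σ := by
      have := Real.strictAntiOn_cos ⟨by linarith, le_of_lt hσltpi⟩
        (Set.right_mem_Icc.2 (by linarith)) hσltpi
      rw [Real.cos_pi] at this; linarith
    have hc2 : Real.cos σ < -(1/2) := by
      have := Real.strictAntiOn_cos ⟨by linarith, by linarith⟩
        ⟨by linarith, le_of_lt hσltpi⟩ (by linarith : 2 * Real.pi / 3 < σ)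
      rw [cos_2pi3] at this; linarith
    have hd1 : -(1/2) ≤ Real.cos s' := by
      rcases eq_or_lt_of_le hs'23 with hh | hh
      · rw [hh, cos_2pi3]
      · have := Real.strictAntiOn_cos ⟨hs'0, by linarith⟩ ⟨by linarith, by linarith⟩ hh
        rw [cos_2pi3] at this; linarith
    have hd2 : Real.cos s' ≤ 1 := Real.cos_le_one s'
    have hconstr : (1 - Real.cos σ)^3 * (1 + Real.cos σ) = (1 - Real.cos s')^3 * (1 + Real.cos s') := by
      have e1 : gfn s' = Real.sin s' * (1 - Real.cos s') / 2 := gfn_eq s'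
      have e2 : gfn σ = Real.sin σ * (1 - Real.cos σ) / 2 := gfn_eq σ
      have q1 : Real.sin s' ^ 2 = 1 - Real.cos s' ^ 2 := Real.sin_sq s'
      have q2 : Real.sin σ ^ 2 = 1 - Real.cos σ ^ 2 := Real.sin_sq σ
      have hsq : (Real.sin s' * (1 - Real.cos s'))^2 = (Real.sin σ * (1 - Real.cos σ))^2 := by
        have : Real.sin s' * (1 - Real.cos s') = Real.sin σ * (1 - Real.cos σ) := by
          rw [e1, e2] at hgs'; linarith
        rw [this]
      linear_combination -hsq + (1-Real.cos s')^2 * q1 - (1-Real.cos σ)^2 * q2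
    have hkey : (1 + 2*Real.cos σ)*(1 - Real.cos σ) + (1 + 2*Real.cos s')*(1 - Real.cos s') < 0 :=
      crux_cd _ _ hc1 hc2 hd1 hd2 hconstr
    have hinner : HasDerivAt (fun t : ℝ => C - t) (-1) σ := (hasDerivAt_id σ).const_sub C
    have hD1 : HasDerivAt (fun t => gfn (C - t))
        (-((1/2) * (1 + 2 * Real.cos s') * (1 - Real.cos s'))) σ := by
      have := (gfn_hasDerivAt s').comp σ hinner
      exact this.congr_deriv (by ring)
    have hDD : HasDerivAt D
        (-((1/2) * (1 + 2 * Real.cos s') * (1 - Real.cos s'))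
          - (1/2) * (1 + 2 * Real.cos σ) * (1 - Real.cos σ)) σ :=
      hD1.sub (gfn_hasDerivAt σ)
    have hm : 0 < -((1/2) * (1 + 2 * Real.cos s') * (1 - Real.cos s'))
          - (1/2) * (1 + 2 * Real.cos σ) * (1 - Real.cos σ) := by nlinarith [hkey]
    rw [hasDerivAt_iff_tendsto_slope] at hDD
    have hsl : ∀ᶠ t in nhdsWithin σ {σ}ᶜ, 0 < slope D σ t := hDD.eventually_mem (eventually_gt_nhds hm)
    have hsl' : ∀ᶠ t in nhdsWithin σ (Set.Ioi σ), 0 < slope D σ t :=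
      hsl.filter_mono (nhdsWithin_mono σ (fun t ht => ne_of_gt ht))
    have hIoc : Set.Ioc σ τ ∈ nhdsWithin σ (Set.Ioi σ) := Ioc_mem_nhdsGT hστ
    obtain ⟨t, hslt, htIoc⟩ := (hsl'.and hIoc).exists
    have htσ : σ < t := htIoc.1
    have hDt : 0 < D t - D σ := by
      have := hslt
      rw [slope_def_field] at this
      have h2 : 0 < t - σ := by linarith
      calc (0:ℝ) = 0 * (t - σ) := by ring
        _ < (D t - D σ)/(t-σ) * (t - σ) := by
            apply mul_lt_mul_of_pos_right this h2
        _ = D t - D σ := by field_simp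
    have := hneg t htIoc
    linarith
  have hb0 : 0 ≤ D b := key b (Set.right_mem_Icc.2 hab)
  have hbI : b ∈ Set.Icc (2 * Real.pi / 3) Real.pi := ⟨by linarith, hb⟩
  have hJb := (Jfun_spec hbI).1
  have h1 : gfn (Jfun b) ≤ gfn (C - b) := by
    have h2 : D b = gfn (C - b) - gfn b := rfl
    rw [hJb.2]; linarith
  have hCb0 : (0:ℝ) ≤ C - b := by linarith
  have hCb23 : C - b ≤ 2 * Real.pi / 3 := by
    have := hJa.1.2
    simp only [hC]; linarith
  have := (gfn_mono.le_iff_le hJb.1 ⟨hCb0, hCb23⟩).1 h1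
  simp only [hC] at this ⊢
  linarith

def eps (n : ℕ) : ℝ := 2 * Real.pi / (3 * ((n : ℝ) + 1))

lemma eps_pos (n : ℕ) : 0 < eps n := by
  unfold eps
  have := Real.pi_pos
  positivity

lemma thetaAux_formula (n k : ℕ) :
    thetaAux n k = (2 * (k:ℝ) + ((n % 2 : ℕ) : ℝ)) * Real.pi / ((n:ℝ)+1) := by
  unfold thetaAux
  split <;> rename_i hpar
  · rw [hpar]; push_cast; ring
  · have h1 : n % 2 = 1 := by omega
    rw [h1]; push_cast; ring

lemma theta_formula {n k : ℕ} (hk : k ≤ n / 2) :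
    theta n k = (2 * (k:ℝ) + ((n % 2 : ℕ) : ℝ)) * Real.pi / ((n:ℝ)+1) := by
  rw [theta, if_pos hk, thetaAux_formula]

lemma theta_eq_eps {n k : ℕ} (hk : k ≤ n / 2) :
    theta n k = (2 * (k:ℝ) + ((n % 2 : ℕ) : ℝ)) * (3/2) * eps n := by
  rw [theta_formula hk, eps]
  have hN : ((n:ℝ)+1) ≠ 0 := by positivity
  field_simp

lemma theta_nonneg {n k : ℕ} (hk : k ≤ n / 2) : 0 ≤ theta n k := by
  rw [theta_eq_eps hk]
  have := eps_pos n
  positivity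

lemma theta_ub {n k : ℕ} (hk : k ≤ n / 2) :
    theta n k ≤ Real.pi - (3/2) * eps n := by
  rw [theta_eq_eps hk]
  have hcoeff : 2 * k + n % 2 ≤ n := by omega
  have hco : (2 * (k:ℝ) + ((n % 2 : ℕ) : ℝ)) ≤ (n : ℝ) := by exact_mod_cast hcoeff
  have hpi3 : Real.pi = ((n:ℝ)+1) * (3/2) * eps n := by
    rw [eps]
    have hN : ((n:ℝ)+1) ≠ 0 := by positivity
    field_simp
  have he := eps_pos n
  nlinarith [he, hco]

lemma theta_spacing {n j k : ℕ} (hj : j ≤ n / 2) (hk : k ≤ n / 2) (hne : j ≠ k) :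
    3 * eps n ≤ |theta n j - theta n k| := by
  rw [theta_eq_eps hj, theta_eq_eps hk]
  have he := eps_pos n
  have h1 : (1:ℝ) ≤ |(j:ℝ) - (k:ℝ)| := by
    rcases lt_or_gt_of_ne hne with hlt | hgt
    · have hc : (j:ℝ) + 1 ≤ (k:ℝ) := by exact_mod_cast hlt
      rw [abs_sub_comm, abs_of_nonneg (by linarith)]
      linarith
    · have hc : (k:ℝ) + 1 ≤ (j:ℝ) := by exact_mod_cast hgt
      rw [abs_of_nonneg (by linarith)]
      linarith
  have heq : (2 * (j:ℝ) + ((n % 2 : ℕ) : ℝ)) * (3/2) * eps n - (2 * (k:ℝ) + ((n % 2 : ℕ) : ℝ)) * (3/2) * eps n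
      = ((j:ℝ) - (k:ℝ)) * (3 * eps n) := by ring
  rw [heq, abs_mul, abs_of_nonneg (by positivity : (0:ℝ) ≤ 3 * eps n)]
  nlinarith [h1, he]

lemma theta_lb_one {n k : ℕ} (hk : k ≤ n / 2) (h1 : 1 ≤ k) : 3 * eps n ≤ theta n k := by
  rw [theta_eq_eps hk]
  have he := eps_pos n
  have : (1:ℝ) ≤ (k:ℝ) := by exact_mod_cast h1
  have h0 : (0:ℝ) ≤ ((n % 2 : ℕ) : ℝ) := by positivity
  nlinarith

lemma theta_lb_odd {n k : ℕ} (hk : k ≤ n / 2) (hodd : n % 2 = 1) :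
    (3/2) * eps n ≤ theta n k := by
  rw [theta_eq_eps hk, hodd]
  have he := eps_pos n
  have : (0:ℝ) ≤ (k:ℝ) := by positivity
  push_cast
  nlinarith

lemma theta_even_zero {n : ℕ} (heven : n % 2 = 0) : theta n 0 = 0 := by
  rw [theta_formula (Nat.zero_le _), heven]
  push_cast
  ring

lemma theta_mirror {n k : ℕ} (hk1 : n / 2 < k) (hk2 : k ≤ n) :
    theta n k = - theta n (2 * (n / 2) + 1 - k) ∧ 2 * (n / 2) + 1 - k ≤ n / 2 ∧
    (n % 2 = 0 → 1 ≤ 2 * (n / 2) + 1 - k) ∧ theta n k < 0 := by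
  have hk'm : 2 * (n / 2) + 1 - k ≤ n / 2 := by omega
  have h1 : theta n k = - thetaAux n (2 * (n / 2) + 1 - k) := by
    rw [theta, if_neg (by omega)]
  have h2 : theta n (2 * (n / 2) + 1 - k) = thetaAux n (2 * (n / 2) + 1 - k) := by
    rw [theta, if_pos hk'm]
  refine ⟨by rw [h1, h2], hk'm, by omega, ?_⟩
  rw [h1, thetaAux_formula]
  have hpos : (0:ℝ) < (2 * ((2 * (n / 2) + 1 - k : ℕ):ℝ) + ((n % 2 : ℕ) : ℝ)) := by
    have : 1 ≤ 2 * (2 * (n / 2) + 1 - k) + n % 2 := by omega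
    have hc : (1:ℝ) ≤ ((2 * (2 * (n / 2) + 1 - k) + n % 2 : ℕ) : ℝ) := by exact_mod_cast this
    push_cast at hc ⊢
    linarith
  have hpi := Real.pi_pos
  have hN : (0:ℝ) < (n:ℝ)+1 := by positivity
  have : 0 < (2 * ((2 * (n / 2) + 1 - k : ℕ):ℝ) + ((n % 2 : ℕ) : ℝ)) * Real.pi / ((n:ℝ)+1) := by
    positivity
  linarith

lemma eps_expr (n : ℕ) : 2 * Real.pi / (3 * ((n : ℝ) + 1)) = eps n := rfl

lemma pair_small {n j k : ℕ} (h : AdjPair n j k) : j ≤ n / 2 ∧ k ≤ n / 2 := by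
  obtain ⟨hjn, hkn, hθj0, hθj2, hθk2, hθkpi, hd⟩ := h
  have hpi := Real.pi_pos
  constructor
  · by_contra hj
    push_neg at hj
    have := (theta_mirror hj hjn).2.2.2
    linarith
  · by_contra hk
    push_neg at hk
    have := (theta_mirror hk hkn).2.2.2
    linarith

lemma big_lt_pi {n k : ℕ} (hk : k ≤ n / 2) : theta n k < Real.pi := by
  have := theta_ub hk
  have := eps_pos n
  linarith

lemma big_mem {n k : ℕ} (hk : k ≤ n / 2) (hbig : 2 * Real.pi / 3 < theta n k) :
    theta n k ∈ Set.Icc (2 * Real.pi / 3) Real.pi :=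
  ⟨le_of_lt hbig, le_of_lt (big_lt_pi hk)⟩

lemma Jlb {n k : ℕ} (hk : k ≤ n / 2) (hbig : 2 * Real.pi / 3 < theta n k) :
    (3/2) * eps n ≤ Jfun (theta n k) := by
  have hub := theta_ub hk
  have he := eps_pos n
  have hpi := Real.pi_pos
  exact Jfun_lb (big_mem hk hbig) (by linarith) (by linarith) (by linarith)

lemma Jub {n k : ℕ} (hk : k ≤ n / 2) (hbig : 2 * Real.pi / 3 < theta n k) :
    Jfun (theta n k) ∈ Set.Icc 0 (2 * Real.pi / 3) ∧ gfn (Jfun (theta n k)) = gfn (theta n k) :=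
  (Jfun_spec (big_mem hk hbig)).1

lemma pair_vals {n j k : ℕ} {θt : ℕ → ℝ} (h : AdjCond n θt) (hp : AdjPair n j k) :
    (Jfun (theta n k) ≤ theta n j ∧ θt j = Jfun (theta n k) + eps n ∧
      θt k = theta n j - eps n) ∨
    (theta n j < Jfun (theta n k) ∧ θt j = Jfun (theta n k) - eps n ∧
      θt k = theta n j + eps n) := by
  by_cases hJ : Jfun (theta n k) ≤ theta n j
  · obtain ⟨h1, h2⟩ := h.2.1 j k hp hJ
    exact Or.inl ⟨hJ, h1, h2⟩
  · push_neg at hJ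
    obtain ⟨h1, h2⟩ := h.2.2.1 j k hp hJ
    exact Or.inr ⟨hJ, h1, h2⟩

lemma pair_dist {n j k : ℕ} (hp : AdjPair n j k) :
    |theta n j - Jfun (theta n k)| < eps n := hp.2.2.2.2.2.2

lemma pair_cluster {n j k : ℕ} {θt : ℕ → ℝ} (h : AdjCond n θt) (hp : AdjPair n j k) :
    |θt j - Jfun (theta n k)| ≤ eps n ∧ |θt k - Jfun (theta n k)| ≤ eps n := by
  have hd := pair_dist hp
  rw [abs_sub_lt_iff] at hd
  have he := eps_pos n
  rcases pair_vals h hp with ⟨h1, h2, h3⟩ | ⟨h1, h2, h3⟩ <;> rw [h2, h3] <;>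
    constructor <;> rw [abs_le] <;> constructor <;> linarith [hd.1, hd.2]

lemma sep_of_centers {a b c1 c2 r1 r2 e : ℝ} (h1 : |a - c1| ≤ r1) (h2 : |b - c2| ≤ r2)
    (h3 : r1 + r2 + e ≤ |c1 - c2|) : e ≤ |a - b| := by
  have t1 : |c1 - c2| ≤ |c1 - a| + |a - c2| := abs_sub_le c1 a c2
  have t2 : |a - c2| ≤ |a - b| + |b - c2| := abs_sub_le a b c2
  rw [abs_sub_comm c1 a] at t1
  linarith

lemma conflict {n p q k : ℕ} {θt : ℕ → ℝ} (h : AdjCond n θt) (hpk : AdjPair n p k)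
    (hqk : AdjPair n q k) (hne : p ≠ q) : False := by
  have hP := pair_small hpk
  have hQ := pair_small hqk
  have hs := theta_spacing hP.1 hQ.1 hne
  have he := eps_pos n
  rcases abs_cases (theta n p - theta n q) with ⟨ha, _⟩ | ⟨ha, _⟩ <;>
  rcases pair_vals h hpk with ⟨_, _, h3⟩ | ⟨_, _, h3⟩ <;>
  rcases pair_vals h hqk with ⟨_, _, h3'⟩ | ⟨_, _, h3'⟩ <;>
  · rw [h3] at h3'
    linarith

lemma sepJJ {n u v : ℕ} (hu : u ≤ n / 2) (hv : v ≤ n / 2) (hne : u ≠ v)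
    (hbu : 2 * Real.pi / 3 < theta n u) (hbv : 2 * Real.pi / 3 < theta n v) :
    3 * eps n ≤ |Jfun (theta n u) - Jfun (theta n v)| := by
  have hs := theta_spacing hu hv hne
  rcases lt_trichotomy (theta n u) (theta n v) with hlt | heq | hgt
  · have hlip := Jfun_lip hbu (le_of_lt hlt) (le_of_lt (big_lt_pi hv))
    have habs : |theta n u - theta n v| = theta n v - theta n u := by
      rw [abs_sub_comm, abs_of_nonneg (by linarith)]
    rw [habs] at hs
    have : 3 * eps n ≤ Jfun (theta n u) - Jfun (theta n v) := by linarith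
    exact this.trans (le_abs_self _)
  · rw [heq, sub_self, abs_zero] at hs
    have := eps_pos n
    linarith
  · have hlip := Jfun_lip hbv (le_of_lt hgt) (le_of_lt (big_lt_pi hu))
    have habs : |theta n u - theta n v| = theta n u - theta n v := by
      rw [abs_of_nonneg (by linarith)]
    rw [habs] at hs
    have : 3 * eps n ≤ Jfun (theta n v) - Jfun (theta n u) := by linarith
    rw [abs_sub_comm]
    exact this.trans (le_abs_self _)

lemma classify {n p : ℕ} {θt : ℕ → ℝ} (h : AdjCond n θt) (hp : p ≤ n / 2) :
    (θt p = theta n p ∧ theta n p ≤ 2 * Real.pi / 3 ∧ ∀ k, ¬ AdjPair n p k) ∨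
    (∃ k, AdjPair n p k) ∨
    (θt p = Jfun (theta n p) ∧ 2 * Real.pi / 3 < theta n p ∧ ∀ j, ¬ AdjPair n j p) ∨
    (∃ j, AdjPair n j p ∧ 2 * Real.pi / 3 < theta n p) := by
  by_cases hbig : 2 * Real.pi / 3 < theta n p
  · by_cases hpair : ∃ j, AdjPair n j p
    · obtain ⟨j, hj⟩ := hpair
      exact Or.inr (Or.inr (Or.inr ⟨j, hj, hbig⟩))
    · have hnp := not_exists.1 hpair
      exact Or.inr (Or.inr (Or.inl
        ⟨h.2.2.2.1 p (le_trans hp (Nat.div_le_self n 2)) hbig (big_lt_pi hp) hnp, hbig, hnp⟩))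
  · push_neg at hbig
    by_cases hpair : ∃ k, AdjPair n p k
    · exact Or.inr (Or.inl hpair)
    · have hnp := not_exists.1 hpair
      exact Or.inl ⟨h.1 p (le_trans hp (Nat.div_le_self n 2)) (theta_nonneg hp) hbig hnp,
        hbig, hnp⟩

lemma sep_internal {n p q : ℕ} {θt : ℕ → ℝ} (h : AdjCond n θt) (hpq : AdjPair n p q) :
    eps n ≤ |θt p - θt q| := by
  have hd := pair_dist hpq
  rw [abs_sub_lt_iff] at hd
  have he := eps_pos n
  rcases pair_vals h hpq with ⟨h1, h2, h3⟩ | ⟨h1, h2, h3⟩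
  · have : eps n ≤ θt p - θt q := by rw [h2, h3]; linarith [hd.1]
    exact this.trans (le_abs_self _)
  · have : eps n ≤ θt q - θt p := by rw [h2, h3]; linarith [hd.2]
    rw [abs_sub_comm]
    exact this.trans (le_abs_self _)

lemma sepG {n p q : ℕ} {θt : ℕ → ℝ} (h : AdjCond n θt) (hp : p ≤ n / 2) (hq : q ≤ n / 2)
    (hne : p ≠ q) (hval : θt p = theta n p) (hsm : theta n p ≤ 2 * Real.pi / 3)
    (hnp : ∀ k, ¬ AdjPair n p k) : eps n ≤ |θt p - θt q| := by
  have he := eps_pos n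
  have hz : |θt p - theta n p| ≤ 0 := by rw [hval, sub_self, abs_zero]
  rcases classify h hq with ⟨hv, hsq, hnq⟩ | ⟨k, hqk⟩ | ⟨hv, hbq, hnq⟩ | ⟨j, hjq, hbq⟩
  · rw [hval, hv]
    exact le_trans (by linarith) (theta_spacing hp hq hne)
  · have hclq := (pair_cluster h hqk).1
    have hdq := pair_dist hqk
    have hs := theta_spacing hp hq hne
    have htr := abs_sub_le (theta n p) (Jfun (theta n k)) (theta n q)
    rw [abs_sub_comm (Jfun (theta n k)) (theta n q)] at htr
    exact sep_of_centers hz hclq (by linarith)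
  · have hzq : |θt q - Jfun (theta n q)| ≤ 0 := by rw [hv, sub_self, abs_zero]
    have hcent : eps n ≤ |theta n p - Jfun (theta n q)| := by
      by_contra hcon
      push_neg at hcon
      exact hnp q ⟨le_trans hp (Nat.div_le_self n 2), le_trans hq (Nat.div_le_self n 2),
        theta_nonneg hp, hsm, hbq, big_lt_pi hq, hcon⟩
    exact sep_of_centers hz hzq (by linarith)
  · have hj := (pair_small hjq).1
    have hjne : p ≠ j := fun hh => hnp q (hh ▸ hjq)
    have hclq := (pair_cluster h hjq).2
    have hdj := pair_dist hjq
    have hs := theta_spacing hp hj hjne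
    have htr := abs_sub_le (theta n p) (Jfun (theta n q)) (theta n j)
    rw [abs_sub_comm (Jfun (theta n q)) (theta n j)] at htr
    exact sep_of_centers hz hclq (by linarith)

lemma sepCC {n p q u v : ℕ} {θt : ℕ → ℝ} (hu : u ≤ n / 2) (hv : v ≤ n / 2) (hne : u ≠ v)
    (hbu : 2 * Real.pi / 3 < theta n u) (hbv : 2 * Real.pi / 3 < theta n v)
    (hcp : |θt p - Jfun (theta n u)| ≤ eps n) (hcq : |θt q - Jfun (theta n v)| ≤ eps n) :
    eps n ≤ |θt p - θt q| :=
  sep_of_centers hcp hcq (by linarith [sepJJ hu hv hne hbu hbv])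

lemma sep_pos {n p q : ℕ} {θt : ℕ → ℝ} (h : AdjCond n θt) (hp : p ≤ n / 2) (hq : q ≤ n / 2)
    (hne : p ≠ q) : eps n ≤ |θt p - θt q| := by
  have he := eps_pos n
  rcases classify h hp with ⟨hv, hsp, hnp⟩ | cp | ⟨hv, hbp, hnp⟩ | cp
  · exact sepG h hp hq hne hv hsp hnp
  all_goals rcases classify h hq with ⟨hv', hsq, hnq⟩ | cq | ⟨hv', hbq, hnq⟩ | cq
  -- p = c1 cases
  · rw [abs_sub_comm]; exact sepG h hq hp (Ne.symm hne) hv' hsq hnq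
  · obtain ⟨k, hpk⟩ := cp
    obtain ⟨k', hqk'⟩ := cq
    by_cases hkk : k = k'
    · exact (conflict h hpk (hkk ▸ hqk') hne).elim
    · exact sepCC (pair_small hpk).2 (pair_small hqk').2 hkk hpk.2.2.2.2.1 hqk'.2.2.2.2.1
        (pair_cluster h hpk).1 (pair_cluster h hqk').1
  · obtain ⟨k, hpk⟩ := cp
    by_cases hkq : k = q
    · exact absurd (hkq ▸ hpk) (hnq p)
    · have hzq : |θt q - Jfun (theta n q)| ≤ eps n := by
        rw [hv', sub_self, abs_zero]; linarith
      exact sepCC (pair_small hpk).2 hq hkq hpk.2.2.2.2.1 hbq (pair_cluster h hpk).1 hzq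
  · obtain ⟨k, hpk⟩ := cp
    obtain ⟨j, hjq, hbq⟩ := cq
    by_cases hkq : k = q
    · by_cases hjp : j = p
      · exact sep_internal h (hkq ▸ hpk)
      · exact (conflict h (hkq ▸ hpk) hjq (Ne.symm hjp)).elim
    · exact sepCC (pair_small hpk).2 hq hkq hpk.2.2.2.2.1 hbq
        (pair_cluster h hpk).1 (pair_cluster h hjq).2
  -- p = c2 cases
  · rw [abs_sub_comm]; exact sepG h hq hp (Ne.symm hne) hv' hsq hnq
  · obtain ⟨k', hqk'⟩ := cq
    by_cases hkp : k' = p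
    · exact absurd (hkp ▸ hqk') (hnp q)
    · have hzp : |θt p - Jfun (theta n p)| ≤ eps n := by
        rw [hv, sub_self, abs_zero]; linarith
      exact sepCC hp (pair_small hqk').2 (fun hh => hkp hh.symm) hbp hqk'.2.2.2.2.1 hzp
        (pair_cluster h hqk').1
  · have hzp : |θt p - Jfun (theta n p)| ≤ eps n := by rw [hv, sub_self, abs_zero]; linarith
    have hzq : |θt q - Jfun (theta n q)| ≤ eps n := by rw [hv', sub_self, abs_zero]; linarith
    exact sepCC hp hq hne hbp hbq hzp hzq
  · obtain ⟨j, hjq, hbq⟩ := cq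
    have hzp : |θt p - Jfun (theta n p)| ≤ eps n := by rw [hv, sub_self, abs_zero]; linarith
    exact sepCC hp hq hne hbp hbq hzp (pair_cluster h hjq).2
  -- p = c3 cases
  · rw [abs_sub_comm]; exact sepG h hq hp (Ne.symm hne) hv' hsq hnq
  · obtain ⟨j, hjp, hbp⟩ := cp
    obtain ⟨k', hqk'⟩ := cq
    by_cases hkp : k' = p
    · by_cases hjq' : j = q
      · rw [abs_sub_comm]; exact sep_internal h (hkp ▸ hqk')
      · exact (conflict h (hkp ▸ hqk') hjp (fun hh => hjq' hh.symm)).elim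
    · exact sepCC hp (pair_small hqk').2 (fun hh => hkp hh.symm) hbp hqk'.2.2.2.2.1
        (pair_cluster h hjp).2 (pair_cluster h hqk').1
  · obtain ⟨j, hjp, hbp⟩ := cp
    have hzq : |θt q - Jfun (theta n q)| ≤ eps n := by rw [hv', sub_self, abs_zero]; linarith
    exact sepCC hp hq hne hbp hbq (pair_cluster h hjp).2 hzq
  · obtain ⟨j, hjp, hbp⟩ := cp
    obtain ⟨j', hj'q, hbq⟩ := cq
    exact sepCC hp hq hne hbp hbq (pair_cluster h hjp).2 (pair_cluster h hj'q).2

lemma pair_j_lb {n j k : ℕ} (hjk : AdjPair n j k) : (1/2) * eps n ≤ theta n j := by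
  have hJ := Jlb (pair_small hjk).2 hjk.2.2.2.2.1
  have hd := pair_dist hjk
  rw [abs_sub_lt_iff] at hd
  linarith [hd.2]

lemma pair_j_one_even {n j k : ℕ} (heven : n % 2 = 0) (hjk : AdjPair n j k) : 1 ≤ j := by
  by_contra hj
  push_neg at hj
  interval_cases j
  have := pair_j_lb hjk
  rw [theta_even_zero heven] at this
  have := eps_pos n
  linarith

lemma val_lb_odd {n p : ℕ} {θt : ℕ → ℝ} (h : AdjCond n θt) (hodd : n % 2 = 1)
    (hp : p ≤ n / 2) : (1/2) * eps n ≤ θt p := by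
  have he := eps_pos n
  rcases classify h hp with ⟨hv, _, _⟩ | ⟨k, hpk⟩ | ⟨hv, hbp, _⟩ | ⟨j, hjp, _⟩
  · rw [hv]; linarith [theta_lb_odd hp hodd]
  · have hJ := Jlb (pair_small hpk).2 hpk.2.2.2.2.1
    have hlo := theta_lb_odd hp hodd
    rcases pair_vals h hpk with ⟨h1, h2, _⟩ | ⟨h1, h2, _⟩ <;> rw [h2] <;> linarith
  · rw [hv]; linarith [Jlb hp hbp]
  · have hlo := theta_lb_odd (pair_small hjp).1 hodd
    rcases pair_vals h hjp with ⟨_, _, h3⟩ | ⟨_, _, h3⟩ <;> rw [h3] <;> linarith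

lemma val_lb_even {n p : ℕ} {θt : ℕ → ℝ} (h : AdjCond n θt) (heven : n % 2 = 0)
    (hp : p ≤ n / 2) (h1p : 1 ≤ p) : eps n ≤ θt p := by
  have he := eps_pos n
  rcases classify h hp with ⟨hv, _, _⟩ | ⟨k, hpk⟩ | ⟨hv, hbp, _⟩ | ⟨j, hjp, _⟩
  · rw [hv]; linarith [theta_lb_one hp h1p]
  · have hJ := Jlb (pair_small hpk).2 hpk.2.2.2.2.1
    have hlo := theta_lb_one hp h1p
    have hd := pair_dist hpk
    rw [abs_sub_lt_iff] at hd
    rcases pair_vals h hpk with ⟨h1, h2, _⟩ | ⟨h1, h2, _⟩ <;> rw [h2] <;> linarith [hd.1, hd.2]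
  · rw [hv]; linarith [Jlb hp hbp]
  · have hlo := theta_lb_one (pair_small hjp).1 (pair_j_one_even heven hjp)
    rcases pair_vals h hjp with ⟨_, _, h3⟩ | ⟨_, _, h3⟩ <;> rw [h3] <;> linarith

lemma val_zero_even {n : ℕ} {θt : ℕ → ℝ} (h : AdjCond n θt) (heven : n % 2 = 0) :
    θt 0 = 0 := by
  have hz := theta_even_zero (n := n) heven
  have hnp : ∀ k, ¬ AdjPair n 0 k := by
    intro k hk
    have := pair_j_one_even heven hk
    omega
  have := h.1 0 (Nat.zero_le n) (by rw [hz]) (by rw [hz]; positivity) hnp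
  rw [this, hz]

lemma sum_pos {n p q : ℕ} {θt : ℕ → ℝ} (h : AdjCond n θt) (hp : p ≤ n / 2) (hq : q ≤ n / 2)
    (hval : n % 2 = 1 ∨ 1 ≤ q) : eps n ≤ θt p + θt q := by
  have he := eps_pos n
  rcases hval with hodd | h1q
  · linarith [val_lb_odd h hodd hp, val_lb_odd h hodd hq]
  · rcases Nat.eq_zero_or_pos (n % 2) with heven | hodd
    · rcases Nat.eq_zero_or_pos p with rfl | h1p
      · rw [val_zero_even h heven]
        linarith [val_lb_even h heven hq h1q]
      · linarith [val_lb_even h heven hp h1p, val_lb_even h heven hq h1q, he]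
    · have hodd' : n % 2 = 1 := by omega
      linarith [val_lb_odd h hodd' hp, val_lb_odd h hodd' hq]


/-- Any `θ̃` satisfying the adjustment conditions (i)–(v) is
`2π/(3(n+1))`-separated. -/
theorem stmt9 (n : ℕ) (hn : 1 ≤ n) (θt : ℕ → ℝ) (h : AdjCond n θt) :
    ∀ j k : ℕ, j < k → k ≤ n → 2 * Real.pi / (3 * ((n : ℝ) + 1)) ≤ |θt j - θt k| := by
  intro j k hjk hkn
  rw [eps_expr n]
  by_cases hj : j ≤ n / 2
  · by_cases hk : k ≤ n / 2
    · exact sep_pos h hj hk (Nat.ne_of_lt hjk)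
    · push_neg at hk
      have hmk := theta_mirror hk hkn
      have hmv : θt k = - θt (2 * (n / 2) + 1 - k) := h.2.2.2.2 k hk hkn
      have hq : 2 * (n / 2) + 1 - k ≤ n / 2 := hmk.2.1
      have hvalid : n % 2 = 1 ∨ 1 ≤ 2 * (n / 2) + 1 - k := by
        rcases Nat.eq_zero_or_pos (n % 2) with he | ho
        · exact Or.inr (hmk.2.2.1 he)
        · exact Or.inl (by omega)
      have hsum := sum_pos h hj hq hvalid
      have heq : θt j - θt k = θt j + θt (2 * (n / 2) + 1 - k) := by rw [hmv]; ring
      rw [heq]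
      exact hsum.trans (le_abs_self _)
  · push_neg at hj
    have hk : n / 2 < k := lt_trans hj hjk
    have hjn : j ≤ n := le_of_lt (lt_of_lt_of_le hjk hkn)
    have hmj := theta_mirror hj hjn
    have hmk := theta_mirror hk hkn
    have hmvj : θt j = - θt (2 * (n / 2) + 1 - j) := h.2.2.2.2 j hj hjn
    have hmvk : θt k = - θt (2 * (n / 2) + 1 - k) := h.2.2.2.2 k hk hkn
    have hne : 2 * (n / 2) + 1 - j ≠ 2 * (n / 2) + 1 - k := by omega
    have heq : |θt j - θt k| =
        |θt (2 * (n / 2) + 1 - j) - θt (2 * (n / 2) + 1 - k)| := by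
      rw [hmvj, hmvk, show -θt (2 * (n / 2) + 1 - j) - -θt (2 * (n / 2) + 1 - k)
        = θt (2 * (n / 2) + 1 - k) - θt (2 * (n / 2) + 1 - j) by ring, abs_sub_comm]
    rw [heq]
    exact sep_pos h hmj.2.1 hmk.2.1 hne
end
end
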